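/- arXiv:2103.05195 — 3 statements merged into one kernel-verified Lean document; each statement's English description precedes it below -/
import Mathlib

section
/- Let D ⊆ [n]² and α ∈ ℤ^n with α₁ + ⋯ + α_n = #D. Then P(D,α) ∩ ℤ^{n²} ≠ ∅ if and only if P(D,α) ≠ ∅; i.e., if the polytope P(D,α) is nonempty then it contains an integer point. -/
namespace Schub

/-- The `n × n` grid `[n]²` (1-based). -/
def grid (n : ℕ) : Finset (ℕ × ℕ) := Finset.Icc 1 n ×ˢ Finset.Icc 1 n

/-- State of the bracket-matching stack in column `c` after reading rows `1,…,r`: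
the set of rows that contributed a so-far unmatched `'('`. -/
def openRows (D : Finset (ℕ × ℕ)) (S : Finset ℕ) (c : ℕ) : ℕ → Finset ℕ
  | 0 => ∅
  | r + 1 =>
    let st := openRows D S c r
    if (r + 1, c) ∉ D ∧ r + 1 ∈ S then insert (r + 1) st
    else if (r + 1, c) ∈ D ∧ r + 1 ∉ S then
      (if h : st.Nonempty then st.erase (st.max' h) else st)
    else st

/-- The label of box `(r,c)` in the tableau `π_{D,S}`. -/
def piLabel (D : Finset (ℕ × ℕ)) (S : Finset ℕ) (r c : ℕ) : Option ℕ :=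
  if (r, c) ∈ D then
    if r ∈ S then some r
    else if h : (openRows D S c (r - 1)).Nonempty then
      some ((openRows D S c (r - 1)).max' h)
    else none
  else none

/-- `θ_D^c(S)`: number of `⋆`'s plus matched `()` pairs in `word_{c,S}(D)`. -/
def thetaCol (n : ℕ) (D : Finset (ℕ × ℕ)) (S : Finset ℕ) (c : ℕ) : ℕ :=
  ((Finset.Icc 1 n).filter fun r => (r, c) ∈ D ∧ r ∈ S).card +
  ((Finset.Icc 1 n).filter fun r =>
      (r, c) ∈ D ∧ r ∉ S ∧ (openRows D S c (r - 1)).Nonempty).card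

/-- `θ_D(S) = Σ_c θ_D^c(S)`. -/
def theta (n : ℕ) (D : Finset (ℕ × ℕ)) (S : Finset ℕ) : ℕ :=
  ∑ c ∈ Finset.Icc 1 n, thetaCol n D S c

/-- `π_{D,S}⁻¹(S)`: boxes of `D` whose `π_{D,S}`-label lies in `S`. -/
def piInv (D : Finset (ℕ × ℕ)) (S : Finset ℕ) : Finset (ℕ × ℕ) :=
  D.filter fun b => ∃ s ∈ S, piLabel D S b.1 b.2 = some s

/-- `τ` is a tableau of shape `D` with labels in `[n] ∪ {∘}`. -/
def IsTab (n : ℕ) (D : Finset (ℕ × ℕ)) (τ : ℕ × ℕ → Option ℕ) : Prop :=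
  (∀ b, b ∉ D → τ b = none) ∧ ∀ b ∈ D, ∀ l, τ b = some l → l ∈ Finset.Icc 1 n

/-- Flagged: any label in row `r` is `≤ r`. -/
def Flagged (D : Finset (ℕ × ℕ)) (τ : ℕ × ℕ → Option ℕ) : Prop :=
  ∀ b ∈ D, ∀ l, τ b = some l → l ≤ b.1

/-- Column-injective: labels in each column are distinct. -/
def ColInj (D : Finset (ℕ × ℕ)) (τ : ℕ × ℕ → Option ℕ) : Prop :=
  ∀ b ∈ D, ∀ b' ∈ D, b.2 = b'.2 → b ≠ b' → ∀ l, τ b = some l → τ b' ≠ some l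

/-- `τ⁻¹(S)`: boxes of `D` whose label lies in `S`. -/
def labInv (D : Finset (ℕ × ℕ)) (τ : ℕ × ℕ → Option ℕ) (S : Finset ℕ) : Finset (ℕ × ℕ) :=
  D.filter fun b => ∃ s ∈ S, τ b = some s

/-- `τ` has content `α`. -/
def HasContent (n : ℕ) (D : Finset (ℕ × ℕ)) (τ : ℕ × ℕ → Option ℕ) (α : ℕ → ℕ) : Prop :=
  ∀ i ∈ Finset.Icc 1 n, (D.filter fun b => τ b = some i).card = α i

/-- Membership in `FCITab(D,α)`. -/
def IsFCI (n : ℕ) (D : Finset (ℕ × ℕ)) (τ : ℕ × ℕ → Option ℕ) (α : ℕ → ℕ) : Prop :=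
  IsTab n D τ ∧ Flagged D τ ∧ ColInj D τ ∧ HasContent n D τ α

/-- Membership in `PerfectTab(D,α)`: additionally no box is unlabelled. -/
def IsPerfect (n : ℕ) (D : Finset (ℕ × ℕ)) (τ : ℕ × ℕ → Option ℕ) (α : ℕ → ℕ) : Prop :=
  IsFCI n D τ α ∧ ∀ b ∈ D, τ b ≠ none

/-- The (lattice point) membership in the Schubitope `S_D`. -/
def InSchubitope (n : ℕ) (D : Finset (ℕ × ℕ)) (α : ℕ → ℕ) : Prop :=
  (∑ i ∈ Finset.Icc 1 n, α i) = D.card ∧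
  ∀ S ⊆ Finset.Icc 1 n, (∑ i ∈ S, α i) ≤ theta n D S

/-- Membership in the polytope `P(D,α)`. -/
def InP (n : ℕ) (D : Finset (ℕ × ℕ)) (α : ℕ → ℝ) (x : ℕ → ℕ → ℝ) : Prop :=
  (∀ i ∈ Finset.Icc 1 n, ∀ j ∈ Finset.Icc 1 n, 0 ≤ x i j ∧ x i j ≤ 1) ∧
  (∀ i ∈ Finset.Icc 1 n, (∑ j ∈ Finset.Icc 1 n, x i j) = α i) ∧
  (∀ j ∈ Finset.Icc 1 n, ∀ s ∈ Finset.Icc 1 n,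
    ((D.filter fun b => b.2 = j ∧ b.1 ≤ s).card : ℝ) ≤ ∑ i ∈ Finset.Icc 1 s, x i j)

/-! ### Auxiliary development for integrality -/

noncomputable section
open Finset
open scoped Classical

/-- A real number is integral. -/
def IsIntR (a : ℝ) : Prop := ∃ z : ℤ, a = (z : ℝ)

lemma isIntR_zero : IsIntR 0 := ⟨0, by norm_num⟩

lemma isIntR_one : IsIntR 1 := ⟨1, by norm_num⟩

lemma isIntR_intCast (z : ℤ) : IsIntR (z : ℝ) := ⟨z, rfl⟩

lemma isIntR_natCast (m : ℕ) : IsIntR (m : ℝ) := ⟨m, by push_cast; ring⟩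

lemma IsIntR.add {a b : ℝ} (ha : IsIntR a) (hb : IsIntR b) : IsIntR (a + b) := by
  obtain ⟨z, rfl⟩ := ha; obtain ⟨w, rfl⟩ := hb; exact ⟨z + w, by push_cast; ring⟩

lemma IsIntR.sub {a b : ℝ} (ha : IsIntR a) (hb : IsIntR b) : IsIntR (a - b) := by
  obtain ⟨z, rfl⟩ := ha; obtain ⟨w, rfl⟩ := hb; exact ⟨z - w, by push_cast; ring⟩

lemma isIntR_sum {ι : Type*} {s : Finset ι} {f : ι → ℝ} (h : ∀ i ∈ s, IsIntR (f i)) :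
    IsIntR (∑ i ∈ s, f i) := by
  classical
  induction s using Finset.induction_on with
  | empty => simpa using isIntR_zero
  | insert a s hx ih =>
    rw [Finset.sum_insert hx]
    exact (h _ (Finset.mem_insert_self _ _)).add
      (ih fun i hi => h i (Finset.mem_insert_of_mem hi))

/-- If a finite sum is integral and one summand is fractional, some other summand
is fractional as well. -/
lemma exists_second_frac {ι : Type*} {s : Finset ι} {f : ι → ℝ}
    (hsum : IsIntR (∑ i ∈ s, f i)) {p : ι} (hp : p ∈ s) (hf : ¬ IsIntR (f p)) :
    ∃ q ∈ s, q ≠ p ∧ ¬ IsIntR (f q) := by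
  classical
  by_contra h
  push_neg at h
  apply hf
  have h2 : IsIntR (∑ i ∈ s.erase p, f i) :=
    isIntR_sum fun i hi => h i (Finset.mem_of_mem_erase hi) (Finset.ne_of_mem_erase hi)
  have h3 : f p = (∑ i ∈ s, f i) - ∑ i ∈ s.erase p, f i := by
    rw [← Finset.sum_erase_add s f hp]; ring
  rw [h3]; exact hsum.sub h2

/-- Column prefix sums. -/
def Pref (x : ℕ → ℕ → ℝ) (j s : ℕ) : ℝ := ∑ i ∈ Finset.Icc 1 s, x i j

lemma pref_zero (x : ℕ → ℕ → ℝ) (j : ℕ) : Pref x j 0 = 0 := by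
  rw [Pref, Finset.Icc_eq_empty (by omega), Finset.sum_empty]

lemma pref_eq_Ioc (x : ℕ → ℕ → ℝ) (j s : ℕ) : Pref x j s = ∑ i ∈ Finset.Ioc 0 s, x i j := by
  rw [Pref, ← Finset.Icc_add_one_left_eq_Ioc, zero_add]

lemma sum_Ioc_eq_pref_sub (x : ℕ → ℕ → ℝ) (j : ℕ) {a b : ℕ} (hab : a ≤ b) :
    ∑ i ∈ Finset.Ioc a b, x i j = Pref x j b - Pref x j a := by
  rw [pref_eq_Ioc, pref_eq_Ioc,
    ← Finset.Ioc_union_Ioc_eq_Ioc (Nat.zero_le a) hab,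
    Finset.sum_union (Finset.disjoint_left.2 fun t h1 h2 => by
      rw [Finset.mem_Ioc] at h1 h2; omega)]
  ring

/-- Fractional entries. -/
def FracEnt (n : ℕ) (x : ℕ → ℕ → ℝ) : Finset (ℕ × ℕ) :=
  (grid n).filter fun p => ¬ IsIntR (x p.1 p.2)

/-- Fractional prefix sums (`(j,s)` pairs). -/
def FracPref (n : ℕ) (x : ℕ → ℕ → ℝ) : Finset (ℕ × ℕ) :=
  (grid n).filter fun q => ¬ IsIntR (Pref x q.1 q.2)

/-- Complexity measure. -/
def mu (n : ℕ) (x : ℕ → ℕ → ℝ) : ℕ := (FracEnt n x).card + (FracPref n x).card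

/-- Rows with integral prefix sum in a column. -/
def Zint (x : ℕ → ℕ → ℝ) (n j : ℕ) : Finset ℕ :=
  (Finset.range (n+1)).filter fun s => IsIntR (Pref x j s)

lemma zero_mem_Zint (x : ℕ → ℕ → ℝ) (n j : ℕ) : 0 ∈ Zint x n j := by
  rw [Zint, Finset.mem_filter, Finset.mem_range, pref_zero]
  exact ⟨by omega, isIntR_zero⟩

def blkA (x : ℕ → ℕ → ℝ) (n : ℕ) (p : ℕ × ℕ) : ℕ :=
  if h : ((Zint x n p.2).filter fun u => u < p.1).Nonempty
  then ((Zint x n p.2).filter fun u => u < p.1).max' h else 0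

def blkB (x : ℕ → ℕ → ℝ) (n : ℕ) (p : ℕ × ℕ) : ℕ :=
  if h : ((Zint x n p.2).filter fun u => p.1 ≤ u).Nonempty
  then ((Zint x n p.2).filter fun u => p.1 ≤ u).min' h else 0

def blk (x : ℕ → ℕ → ℝ) (n : ℕ) (p : ℕ × ℕ) : ℕ × ℕ × ℕ := (p.2, blkA x n p, blkB x n p)

section BlkFacts

variable {x : ℕ → ℕ → ℝ} {n : ℕ} {p : ℕ × ℕ}

lemma blkA_spec (hp1 : 1 ≤ p.1) :
    blkA x n p ∈ Zint x n p.2 ∧ blkA x n p < p.1 := by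
  have hne : ((Zint x n p.2).filter fun u => u < p.1).Nonempty :=
    ⟨0, Finset.mem_filter.2 ⟨zero_mem_Zint x n p.2, by omega⟩⟩
  rw [blkA, dif_pos hne]
  have := Finset.max'_mem _ hne
  rw [Finset.mem_filter] at this
  exact this

lemma blkA_max (hp1 : 1 ≤ p.1) {t : ℕ} (ht : t ∈ Zint x n p.2) (htp : t < p.1) :
    t ≤ blkA x n p := by
  have hne : ((Zint x n p.2).filter fun u => u < p.1).Nonempty :=
    ⟨0, Finset.mem_filter.2 ⟨zero_mem_Zint x n p.2, by omega⟩⟩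
  rw [blkA, dif_pos hne]
  exact Finset.le_max' ((Zint x n p.2).filter fun u => u < p.1) t (Finset.mem_filter.2 ⟨ht, htp⟩)

lemma blkB_spec (hpn : p.1 ≤ n) (hn : n ∈ Zint x n p.2) :
    blkB x n p ∈ Zint x n p.2 ∧ p.1 ≤ blkB x n p := by
  have hne : ((Zint x n p.2).filter fun u => p.1 ≤ u).Nonempty :=
    ⟨n, Finset.mem_filter.2 ⟨hn, hpn⟩⟩
  rw [blkB, dif_pos hne]
  have := Finset.min'_mem _ hne
  rw [Finset.mem_filter] at this
  exact this

lemma blkB_min (hpn : p.1 ≤ n) (hn : n ∈ Zint x n p.2) {t : ℕ}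
    (ht : t ∈ Zint x n p.2) (htp : p.1 ≤ t) : blkB x n p ≤ t := by
  have hne : ((Zint x n p.2).filter fun u => p.1 ≤ u).Nonempty :=
    ⟨n, Finset.mem_filter.2 ⟨hn, hpn⟩⟩
  rw [blkB, dif_pos hne]
  exact Finset.min'_le ((Zint x n p.2).filter fun u => p.1 ≤ u) t (Finset.mem_filter.2 ⟨ht, htp⟩)

lemma blkB_le (hpn : p.1 ≤ n) (hn : n ∈ Zint x n p.2) : blkB x n p ≤ n := by
  have := (blkB_spec hpn hn).1
  rw [Zint, Finset.mem_filter, Finset.mem_range] at this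
  omega

lemma blk_gap (hp1 : 1 ≤ p.1) (hpn : p.1 ≤ n) (hn : n ∈ Zint x n p.2) {t : ℕ}
    (ht : t ∈ Zint x n p.2) (htB : t < blkB x n p) : t ≤ blkA x n p := by
  have h1 : t < p.1 := by
    by_contra h
    push_neg at h
    exact absurd (blkB_min hpn hn ht h) (by omega)
  exact blkA_max hp1 ht h1

lemma blk_eq_of_mem_Ioc {q : ℕ × ℕ} (hp1 : 1 ≤ p.1) (hpn : p.1 ≤ n)
    (hn : n ∈ Zint x n p.2) (hcol : q.2 = p.2)
    (h1 : blkA x n p < q.1) (h2 : q.1 ≤ blkB x n p) : blk x n q = blk x n p := by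
  have hq1 : 1 ≤ q.1 := by omega
  have hqn : q.1 ≤ n := le_trans h2 (blkB_le hpn hn)
  have hnq : n ∈ Zint x n q.2 := by rw [hcol]; exact hn
  have hApZ : blkA x n p ∈ Zint x n q.2 := by rw [hcol]; exact (blkA_spec hp1).1
  have hBpZ : blkB x n p ∈ Zint x n q.2 := by rw [hcol]; exact (blkB_spec hpn hn).1
  have hAq := blkA_spec (x := x) (n := n) (p := q) hq1
  have hBq := blkB_spec (x := x) (n := n) (p := q) hqn hnq
  have hA_le : blkA x n p ≤ blkA x n q := blkA_max hq1 hApZ h1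
  have hA_ge : blkA x n q ≤ blkA x n p := by
    apply blk_gap hp1 hpn hn (by rw [← hcol]; exact hAq.1)
    omega
  have hB_le : blkB x n q ≤ blkB x n p := blkB_min hqn hnq hBpZ h2
  have hB_ge : blkB x n p ≤ blkB x n q := by
    by_contra h
    push_neg at h
    have := blk_gap hp1 hpn hn (by rw [← hcol]; exact hBq.1) h
    omega
  simp only [blk, Prod.mk.injEq]
  exact ⟨hcol, by omega, by omega⟩

lemma mem_Ioc_of_blk_eq {q : ℕ × ℕ} (hq1 : 1 ≤ q.1) (hqn : q.1 ≤ n)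
    (hnq : n ∈ Zint x n q.2) (heq : blk x n q = blk x n p) :
    q.2 = p.2 ∧ blkA x n p < q.1 ∧ q.1 ≤ blkB x n p := by
  have h1 : q.2 = p.2 := congrArg Prod.fst heq
  have h2 : blkA x n q = blkA x n p := congrArg (fun b => b.2.1) heq
  have h3 : blkB x n q = blkB x n p := congrArg (fun b => b.2.2) heq
  exact ⟨h1, h2 ▸ (blkA_spec hq1).2, h3 ▸ (blkB_spec hqn hnq).2⟩

end BlkFacts

/-- Reindexing a row sum over the support. -/
lemma sum_row_filter {n : ℕ} {F : Finset (ℕ × ℕ)} (hFg : F ⊆ grid n)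
    (gb : ℕ → ℕ → ℝ) (hsupp : ∀ p : ℕ × ℕ, p ∉ F → gb p.1 p.2 = 0) (i : ℕ) :
    ∑ j ∈ Finset.Icc 1 n, gb i j = ∑ p ∈ F.filter (fun p => p.1 = i), gb p.1 p.2 := by
  classical
  have h1 : ∑ j ∈ (Finset.Icc 1 n).filter (fun j => (i, j) ∈ F), gb i j
      = ∑ j ∈ Finset.Icc 1 n, gb i j := by
    apply Finset.sum_filter_of_ne
    intro j _ hne
    by_contra h
    exact hne (hsupp (i, j) h)
  rw [← h1]
  apply Finset.sum_nbij' (fun j => (i, j)) (fun p => p.2)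
  · intro j hj
    rw [Finset.mem_filter] at hj ⊢
    exact ⟨hj.2, rfl⟩
  · intro p hp
    rw [Finset.mem_filter] at hp ⊢
    have hg := hFg hp.1
    rw [grid, Finset.mem_product] at hg
    have : (i, p.2) = p := by rw [← hp.2]
    exact ⟨hg.2, this ▸ hp.1⟩
  · intro j _; rfl
  · intro p hp
    rw [Finset.mem_filter] at hp
    rw [← hp.2]
  · intro j _; rfl

/-- Reindexing a column (prefix) sum over the support. -/
lemma sum_col_filter {n : ℕ} {F : Finset (ℕ × ℕ)} (hFg : F ⊆ grid n)
    (gb : ℕ → ℕ → ℝ) (hsupp : ∀ p : ℕ × ℕ, p ∉ F → gb p.1 p.2 = 0) (j s : ℕ) :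
    ∑ i ∈ Finset.Icc 1 s, gb i j
      = ∑ p ∈ F.filter (fun p => p.2 = j ∧ p.1 ≤ s), gb p.1 p.2 := by
  classical
  have h1 : ∑ i ∈ (Finset.Icc 1 s).filter (fun i => (i, j) ∈ F), gb i j
      = ∑ i ∈ Finset.Icc 1 s, gb i j := by
    apply Finset.sum_filter_of_ne
    intro i _ hne
    by_contra h
    exact hne (hsupp (i, j) h)
  rw [← h1]
  apply Finset.sum_nbij' (fun i => (i, j)) (fun p => p.1)
  · intro i hi
    rw [Finset.mem_filter] at hi ⊢
    rw [Finset.mem_Icc] at hi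
    exact ⟨hi.2, rfl, hi.1.2⟩
  · intro p hp
    rw [Finset.mem_filter] at hp ⊢
    have hg := hFg hp.1
    rw [grid, Finset.mem_product, Finset.mem_Icc] at hg
    have : (p.1, j) = p := by rw [← hp.2.1]
    rw [Finset.mem_Icc]
    exact ⟨⟨hg.1.1, hp.2.2⟩, this ▸ hp.1⟩
  · intro i _; rfl
  · intro p hp
    rw [Finset.mem_filter] at hp
    rw [← hp.2.1]
  · intro i _; rfl

/-- Existence of a perturbation direction supported on the fractional entries. -/
lemma exists_dir (n : ℕ) (x : ℕ → ℕ → ℝ)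
    (hrow : ∀ i ∈ Finset.Icc 1 n, IsIntR (∑ j ∈ Finset.Icc 1 n, x i j))
    (hcoln : ∀ j ∈ Finset.Icc 1 n, IsIntR (Pref x j n))
    (hne : (FracEnt n x).Nonempty) :
    ∃ gb : ℕ → ℕ → ℝ,
      (∀ p : ℕ × ℕ, p ∉ FracEnt n x → gb p.1 p.2 = 0) ∧
      (∀ i, ∑ j ∈ Finset.Icc 1 n, gb i j = 0) ∧
      (∀ j s, s ≤ n → IsIntR (Pref x j s) → ∑ i ∈ Finset.Icc 1 s, gb i j = 0) ∧
      ∃ p ∈ FracEnt n x, gb p.1 p.2 ≠ 0 := by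
  classical
  set F := FracEnt n x with hFdef
  have hFg : F ⊆ grid n := Finset.filter_subset _ _
  have hmem : ∀ p ∈ F, (1 ≤ p.1 ∧ p.1 ≤ n) ∧ (1 ≤ p.2 ∧ p.2 ≤ n) ∧ ¬ IsIntR (x p.1 p.2) := by
    intro p hp
    rw [hFdef, FracEnt, Finset.mem_filter, grid, Finset.mem_product,
      Finset.mem_Icc, Finset.mem_Icc] at hp
    exact ⟨hp.1.1, hp.1.2, hp.2⟩
  have hZn : ∀ p ∈ F, n ∈ Zint x n p.2 := by
    intro p hp
    rw [Zint, Finset.mem_filter, Finset.mem_range]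
    refine ⟨by omega, hcoln p.2 ?_⟩
    rw [Finset.mem_Icc]; exact (hmem p hp).2.1
  -- second fractional entry in the same row
  have row_second : ∀ p ∈ F, ∃ q ∈ F, q.1 = p.1 ∧ q ≠ p := by
    intro p hp
    obtain ⟨⟨hp1, hpn⟩, ⟨hq1, hqn⟩, hfrac⟩ := hmem p hp
    have hsum : IsIntR (∑ j ∈ Finset.Icc 1 n, x p.1 j) :=
      hrow p.1 (Finset.mem_Icc.2 ⟨hp1, hpn⟩)
    obtain ⟨j₁, hj₁, hj₁ne, hj₁f⟩ :=
      exists_second_frac hsum (Finset.mem_Icc.2 ⟨hq1, hqn⟩) hfrac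
    refine ⟨(p.1, j₁), ?_, rfl, ?_⟩
    · rw [hFdef, FracEnt, Finset.mem_filter, grid, Finset.mem_product]
      exact ⟨⟨Finset.mem_Icc.2 ⟨hp1, hpn⟩, hj₁⟩, hj₁f⟩
    · intro h
      exact hj₁ne (congrArg Prod.snd h)
  -- second fractional entry in the same block
  have blk_second : ∀ p ∈ F, ∃ q ∈ F, blk x n q = blk x n p ∧ q ≠ p := by
    intro p hp
    obtain ⟨⟨hp1, hpn⟩, ⟨hc1, hcn⟩, hfrac⟩ := hmem p hp
    have hZA := (blkA_spec (x := x) (n := n) (p := p) hp1).1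
    have hZB := (blkB_spec (x := x) (n := n) (p := p) hpn (hZn p hp)).1
    have hAB : blkA x n p ≤ blkB x n p :=
      le_trans (le_of_lt (blkA_spec (x := x) (n := n) (p := p) hp1).2)
        (blkB_spec (x := x) (n := n) (p := p) hpn (hZn p hp)).2
    have hsum : IsIntR (∑ i ∈ Finset.Ioc (blkA x n p) (blkB x n p), x i p.2) := by
      rw [sum_Ioc_eq_pref_sub x p.2 hAB]
      rw [Zint, Finset.mem_filter] at hZA hZB
      exact hZB.2.sub hZA.2
    have hpIoc : p.1 ∈ Finset.Ioc (blkA x n p) (blkB x n p) := by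
      rw [Finset.mem_Ioc]
      exact ⟨(blkA_spec hp1).2, (blkB_spec hpn (hZn p hp)).2⟩
    obtain ⟨i₁, hi₁, hi₁ne, hi₁f⟩ := exists_second_frac hsum hpIoc hfrac
    rw [Finset.mem_Ioc] at hi₁
    have hBn := blkB_le (x := x) (n := n) (p := p) hpn (hZn p hp)
    have hqF : (i₁, p.2) ∈ F := by
      rw [hFdef, FracEnt, Finset.mem_filter, grid, Finset.mem_product]
      refine ⟨⟨Finset.mem_Icc.2 ⟨by omega, by omega⟩, Finset.mem_Icc.2 ⟨hc1, hcn⟩⟩, hi₁f⟩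
    refine ⟨(i₁, p.2), hqF, ?_, ?_⟩
    · exact blk_eq_of_mem_Ioc hp1 hpn (hZn p hp) rfl hi₁.1 hi₁.2
    · intro h
      exact hi₁ne (congrArg Prod.fst h)
  -- counting
  set R := F.image Prod.fst with hRdef
  set Bl := F.image (blk x n) with hBldef
  have hRcard : 2 * R.card ≤ F.card := by
    have hfib := Finset.card_eq_sum_card_fiberwise
      (f := Prod.fst) (s := F) (t := R) (fun p hp => Finset.mem_image_of_mem _ hp)
    have h2 : ∀ r ∈ R, 2 ≤ (F.filter fun p => p.1 = r).card := by
      intro r hr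
      obtain ⟨p, hp, rfl⟩ := Finset.mem_image.1 hr
      obtain ⟨q, hq, hq1, hqne⟩ := row_second p hp
      have : 1 < (F.filter fun p' => p'.1 = p.1).card :=
        Finset.one_lt_card.2 ⟨q, Finset.mem_filter.2 ⟨hq, hq1⟩,
          p, Finset.mem_filter.2 ⟨hp, rfl⟩, hqne⟩
      omega
    calc 2 * R.card = ∑ _r ∈ R, 2 := by rw [Finset.sum_const, smul_eq_mul, mul_comm]
    _ ≤ ∑ r ∈ R, (F.filter fun p => p.1 = r).card := Finset.sum_le_sum h2
    _ = F.card := hfib.symm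
  have hBlcard : 2 * Bl.card ≤ F.card := by
    have hfib := Finset.card_eq_sum_card_fiberwise
      (f := blk x n) (s := F) (t := Bl) (fun p hp => Finset.mem_image_of_mem _ hp)
    have h2 : ∀ b ∈ Bl, 2 ≤ (F.filter fun p => blk x n p = b).card := by
      intro b hb
      obtain ⟨p, hp, rfl⟩ := Finset.mem_image.1 hb
      obtain ⟨q, hq, hq1, hqne⟩ := blk_second p hp
      have : 1 < (F.filter fun p' => blk x n p' = blk x n p).card :=
        Finset.one_lt_card.2 ⟨q, Finset.mem_filter.2 ⟨hq, hq1⟩,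
          p, Finset.mem_filter.2 ⟨hp, rfl⟩, hqne⟩
      omega
    calc 2 * Bl.card = ∑ _b ∈ Bl, 2 := by rw [Finset.sum_const, smul_eq_mul, mul_comm]
    _ ≤ ∑ b ∈ Bl, (F.filter fun p => blk x n p = b).card := Finset.sum_le_sum h2
    _ = F.card := hfib.symm
  obtain ⟨p₀, hp₀⟩ := hne
  have hp₀F : p₀ ∈ F := hp₀
  have hr₀R : p₀.1 ∈ R := Finset.mem_image_of_mem _ hp₀F
  set R' := R.erase p₀.1 with hR'def
  have hcard : R'.card + Bl.card < F.card := by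
    have h1 : R'.card = R.card - 1 := Finset.card_erase_of_mem hr₀R
    have hR1 : 1 ≤ R.card := Finset.card_pos.2 ⟨p₀.1, hr₀R⟩
    omega
  -- the linear map
  set T : (↥F → ℝ) →ₗ[ℝ] ((↥R' → ℝ) × (↥Bl → ℝ)) :=
    LinearMap.prod
      (LinearMap.pi fun r : ↥R' =>
        ∑ p ∈ F.attach.filter (fun p : ↥F => (p : ℕ × ℕ).1 = (r : ℕ)),
          LinearMap.proj (R := ℝ) (ι := ↥F) (φ := fun _ => ℝ) p)
      (LinearMap.pi fun b : ↥Bl =>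
        ∑ p ∈ F.attach.filter (fun p : ↥F => blk x n (p : ℕ × ℕ) = (b : ℕ × ℕ × ℕ)),
          LinearMap.proj (R := ℝ) (ι := ↥F) (φ := fun _ => ℝ) p) with hTdef
  have hnotinj : ¬ Function.Injective T := by
    intro hinj
    have hle := LinearMap.finrank_le_finrank_of_injective hinj
    rw [Module.finrank_pi, Module.finrank_prod, Module.finrank_pi, Module.finrank_pi,
      Fintype.card_coe, Fintype.card_coe, Fintype.card_coe] at hle
    omega
  have hker : LinearMap.ker T ≠ ⊥ := fun h => hnotinj (LinearMap.ker_eq_bot.1 h)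
  obtain ⟨g, hgker, hgne⟩ := (Submodule.ne_bot_iff _).1 hker
  rw [LinearMap.mem_ker] at hgker
  -- the direction
  set gb : ℕ → ℕ → ℝ := fun i j => if h : (i, j) ∈ F then g ⟨(i, j), h⟩ else 0 with hgbdef
  have hgb_eq : ∀ p : ↥F, gb (p : ℕ × ℕ).1 (p : ℕ × ℕ).2 = g p := by
    intro p
    rw [hgbdef]
    exact dif_pos p.2
  have hsupp : ∀ p : ℕ × ℕ, p ∉ F → gb p.1 p.2 = 0 := by
    intro p hp
    rw [hgbdef]
    exact dif_neg hp
  -- conversion between attach sums and plain sums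
  have hconv1 : ∀ r : ℕ,
      ∑ p ∈ F.attach.filter (fun p : ↥F => (p : ℕ × ℕ).1 = r), g p
        = ∑ p ∈ F.filter (fun p => p.1 = r), gb p.1 p.2 := by
    intro r
    rw [Finset.sum_filter, Finset.sum_filter,
      ← Finset.sum_attach F (fun q => if q.1 = r then gb q.1 q.2 else 0)]
    apply Finset.sum_congr rfl
    intro p _
    by_cases h : (p : ℕ × ℕ).1 = r
    · rw [if_pos h, if_pos h, hgb_eq]
    · rw [if_neg h, if_neg h]
  have hconv2 : ∀ b : ℕ × ℕ × ℕ,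
      ∑ p ∈ F.attach.filter (fun p : ↥F => blk x n (p : ℕ × ℕ) = b), g p
        = ∑ p ∈ F.filter (fun p => blk x n p = b), gb p.1 p.2 := by
    intro b
    rw [Finset.sum_filter, Finset.sum_filter,
      ← Finset.sum_attach F (fun q => if blk x n q = b then gb q.1 q.2 else 0)]
    apply Finset.sum_congr rfl
    intro p _
    by_cases h : blk x n (p : ℕ × ℕ) = b
    · rw [if_pos h, if_pos h, hgb_eq]
    · rw [if_neg h, if_neg h]
  -- row and block sums vanish
  have hTg1 : ∀ r : ↥R', ∑ p ∈ F.filter (fun p => p.1 = (r : ℕ)), gb p.1 p.2 = 0 := by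
    intro r
    rw [← hconv1 (r : ℕ)]
    have := congrArg (fun v => v.1 r) hgker
    simpa [hTdef, LinearMap.prod_apply, LinearMap.pi_apply, LinearMap.sum_apply,
      LinearMap.proj_apply] using this
  have hTg2 : ∀ b : ↥Bl, ∑ p ∈ F.filter (fun p => blk x n p = (b : ℕ × ℕ × ℕ)), gb p.1 p.2 = 0 := by
    intro b
    rw [← hconv2 (b : ℕ × ℕ × ℕ)]
    have := congrArg (fun v => v.2 b) hgker
    simpa [hTdef, LinearMap.prod_apply, LinearMap.pi_apply, LinearMap.sum_apply,
      LinearMap.proj_apply] using this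
  have hblocksum : ∀ b : ℕ × ℕ × ℕ,
      ∑ p ∈ F.filter (fun p => blk x n p = b), gb p.1 p.2 = 0 := by
    intro b
    by_cases hb : b ∈ Bl
    · exact hTg2 ⟨b, hb⟩
    · rw [Finset.filter_false_of_mem, Finset.sum_empty]
      intro p hp hpb
      exact hb (hpb ▸ Finset.mem_image_of_mem _ hp)
  have htotR : ∑ r ∈ R, ∑ p ∈ F.filter (fun p => p.1 = r), gb p.1 p.2
      = ∑ p ∈ F, gb p.1 p.2 :=
    Finset.sum_fiberwise_of_maps_to (fun p hp => Finset.mem_image_of_mem _ hp) _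
  have htotB : ∑ b ∈ Bl, ∑ p ∈ F.filter (fun p => blk x n p = b), gb p.1 p.2
      = ∑ p ∈ F, gb p.1 p.2 :=
    Finset.sum_fiberwise_of_maps_to (fun p hp => Finset.mem_image_of_mem _ hp) _
  have htot0 : ∑ p ∈ F, gb p.1 p.2 = 0 := by
    rw [← htotB]
    exact Finset.sum_eq_zero fun b _ => hblocksum b
  have hrow0 : ∀ r : ℕ, ∑ p ∈ F.filter (fun p => p.1 = r), gb p.1 p.2 = 0 := by
    intro r
    by_cases hr : r ∈ R
    · by_cases hr0 : r = p₀.1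
      · subst hr0
        have := Finset.add_sum_erase R
          (fun r => ∑ p ∈ F.filter (fun p => p.1 = r), gb p.1 p.2) hr₀R
        rw [htotR, htot0] at this
        have h2 : ∑ r' ∈ R.erase p₀.1,
            ∑ p ∈ F.filter (fun p => p.1 = r'), gb p.1 p.2 = 0 :=
          Finset.sum_eq_zero fun r' hr' => hTg1 ⟨r', hr'⟩
        rw [h2] at this
        linarith [this]
      · exact hTg1 ⟨r, Finset.mem_erase.2 ⟨hr0, hr⟩⟩
    · rw [Finset.filter_false_of_mem, Finset.sum_empty]
      intro p hp hpr
      exact hr (hpr ▸ Finset.mem_image_of_mem _ hp)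
  -- assemble
  refine ⟨gb, hsupp, ?_, ?_, ?_⟩
  · intro i
    rw [sum_row_filter hFg gb hsupp i]
    exact hrow0 i
  · intro j s hs hint
    rw [sum_col_filter hFg gb hsupp j s]
    have hsZ : s ∈ Zint x n j := by
      rw [Zint, Finset.mem_filter, Finset.mem_range]
      exact ⟨by omega, hint⟩
    have hSS' : F.filter (fun p => p.2 = j ∧ p.1 ≤ s)
        = F.filter (fun p => p.2 = j ∧ blkB x n p ≤ s) := by
      apply Finset.filter_congr
      intro p hp
      obtain ⟨⟨hp1, hpn⟩, _, _⟩ := hmem p hp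
      constructor
      · rintro ⟨hc, hps⟩
        exact ⟨hc, blkB_min hpn (hZn p hp) (by rw [hc]; exact hsZ) hps⟩
      · rintro ⟨hc, hBs⟩
        exact ⟨hc, le_trans (blkB_spec hpn (hZn p hp)).2 hBs⟩
    rw [hSS']
    have hmaps : ∀ p ∈ F.filter (fun p => p.2 = j ∧ blkB x n p ≤ s),
        blk x n p ∈ Bl.filter (fun b => b.1 = j ∧ b.2.2 ≤ s) := by
      intro p hp
      rw [Finset.mem_filter] at hp ⊢
      exact ⟨Finset.mem_image_of_mem _ hp.1, hp.2.1, hp.2.2⟩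
    have := Finset.sum_fiberwise_of_maps_to hmaps (fun p => gb p.1 p.2)
    rw [← this]
    apply Finset.sum_eq_zero
    intro b hb
    rw [Finset.mem_filter] at hb
    have hfeq : (F.filter (fun p => p.2 = j ∧ blkB x n p ≤ s)).filter
        (fun p => blk x n p = b) = F.filter (fun p => blk x n p = b) := by
      ext q
      rw [Finset.mem_filter, Finset.mem_filter, Finset.mem_filter]
      constructor
      · rintro ⟨⟨hqF, _⟩, hqb⟩
        exact ⟨hqF, hqb⟩
      · rintro ⟨hqF, hqb⟩
        refine ⟨⟨hqF, ?_, ?_⟩, hqb⟩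
        · have h1 : q.2 = b.1 := congrArg Prod.fst hqb
          rw [h1, hb.2.1]
        · have h2 : blkB x n q = b.2.2 := congrArg (fun v => v.2.2) hqb
          have h3 := hb.2.2
          omega
    rw [hfeq]
    exact hblocksum b
  · have hgnef : ∃ p : ↥F, g p ≠ 0 := by
      by_contra h
      push_neg at h
      exact hgne (funext fun p => h p)
    obtain ⟨p, hp⟩ := hgnef
    refine ⟨(p : ℕ × ℕ), p.2, ?_⟩
    rw [hgb_eq]
    exact hp

/-- One improvement step: if a feasible point has a fractional entry, there is a
feasible point with smaller complexity measure. -/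
lemma step_lemma (n : ℕ) (D : Finset (ℕ × ℕ)) (hD : D ⊆ grid n) (αr : ℕ → ℝ)
    (hαint : ∀ i ∈ Finset.Icc 1 n, IsIntR (αr i))
    (hsumr : ∑ i ∈ Finset.Icc 1 n, αr i = (D.card : ℝ))
    (x : ℕ → ℕ → ℝ) (hx : InP n D αr x) (hne : (FracEnt n x).Nonempty) :
    ∃ x' : ℕ → ℕ → ℝ, InP n D αr x' ∧ mu n x' < mu n x := by
  classical
  obtain ⟨p₀, hp₀⟩ := hne
  have hp₀g : p₀ ∈ grid n := Finset.mem_of_mem_filter _ hp₀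
  have hn1 : 1 ≤ n := by
    rw [grid, Finset.mem_product, Finset.mem_Icc] at hp₀g
    omega
  have hrow : ∀ i ∈ Finset.Icc 1 n, IsIntR (∑ j ∈ Finset.Icc 1 n, x i j) := by
    intro i hi
    rw [hx.2.1 i hi]
    exact hαint i hi
  -- column sums are integral
  have h1 : ∀ j ∈ Finset.Icc 1 n,
      ((D.filter fun b => b.2 = j ∧ b.1 ≤ n).card : ℝ) ≤ Pref x j n := by
    intro j hj
    exact hx.2.2 j hj n (Finset.mem_Icc.2 ⟨hn1, le_rfl⟩)
  have h2 : ∑ j ∈ Finset.Icc 1 n, Pref x j n = (D.card : ℝ) := by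
    have hswap : ∑ j ∈ Finset.Icc 1 n, Pref x j n
        = ∑ i ∈ Finset.Icc 1 n, ∑ j ∈ Finset.Icc 1 n, x i j := by
      simp only [Pref]
      exact Finset.sum_comm
    rw [hswap, Finset.sum_congr rfl hx.2.1, hsumr]
  have h3 : ∑ j ∈ Finset.Icc 1 n,
      ((D.filter fun b => b.2 = j ∧ b.1 ≤ n).card : ℝ) = (D.card : ℝ) := by
    have hN : D.card = ∑ j ∈ Finset.Icc 1 n, (D.filter fun b => b.2 = j ∧ b.1 ≤ n).card := by
      have hmaps : ∀ b ∈ D, b.2 ∈ Finset.Icc 1 n := by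
        intro b hb
        have := hD hb
        rw [grid, Finset.mem_product] at this
        exact this.2
      rw [Finset.card_eq_sum_card_fiberwise hmaps]
      apply Finset.sum_congr rfl
      intro j _
      congr 1
      apply Finset.filter_congr
      intro b hb
      have := hD hb
      rw [grid, Finset.mem_product, Finset.mem_Icc] at this
      constructor
      · intro h; exact ⟨h, this.1.2⟩
      · intro h; exact h.1
    rw [hN]
    push_cast
    rfl
  have hcol_eq : ∀ j ∈ Finset.Icc 1 n,
      Pref x j n = ((D.filter fun b => b.2 = j ∧ b.1 ≤ n).card : ℝ) := by
    have hzero : ∑ j ∈ Finset.Icc 1 n,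
        (Pref x j n - ((D.filter fun b => b.2 = j ∧ b.1 ≤ n).card : ℝ)) = 0 := by
      rw [Finset.sum_sub_distrib, h2, h3, sub_self]
    have hnn : ∀ j ∈ Finset.Icc 1 n,
        0 ≤ Pref x j n - ((D.filter fun b => b.2 = j ∧ b.1 ≤ n).card : ℝ) := by
      intro j hj; have := h1 j hj; linarith
    intro j hj
    have := (Finset.sum_eq_zero_iff_of_nonneg hnn).1 hzero j hj
    linarith
  have hcoln : ∀ j ∈ Finset.Icc 1 n, IsIntR (Pref x j n) := by
    intro j hj
    rw [hcol_eq j hj]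
    exact isIntR_natCast _
  obtain ⟨g, hsupp, hgrow, hgpref, p₁, hp₁F, hp₁ne⟩ :=
    exists_dir n x hrow hcoln ⟨p₀, hp₀⟩
  have hfrac_of_g : ∀ p : ℕ × ℕ, g p.1 p.2 ≠ 0 → p ∈ FracEnt n x := by
    intro p hg
    by_contra h
    exact hg (hsupp p h)
  have hGfrac : ∀ j s, s ≤ n → (∑ i ∈ Finset.Icc 1 s, g i j) ≠ 0 → ¬ IsIntR (Pref x j s) := by
    intro j s hs hG hint
    exact hG (hgpref j s hs hint)
  have hopen : ∀ p : ℕ × ℕ, p ∈ FracEnt n x → 0 < x p.1 p.2 ∧ x p.1 p.2 < 1 := by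
    intro p hp
    rw [FracEnt, Finset.mem_filter, grid, Finset.mem_product] at hp
    have hb := hx.1 p.1 hp.1.1 p.2 hp.1.2
    constructor
    · rcases lt_or_eq_of_le hb.1 with h | h
      · exact h
      · exact absurd (h ▸ isIntR_zero) hp.2
    · rcases lt_or_eq_of_le hb.2 with h | h
      · exact h
      · exact absurd (h ▸ isIntR_one) hp.2
  -- the candidate step sizes
  set EntCand : Finset ℝ := ((grid n).filter fun p => g p.1 p.2 ≠ 0).image
    (fun p => if 0 < g p.1 p.2 then (1 - x p.1 p.2) / g p.1 p.2
      else x p.1 p.2 / (- g p.1 p.2)) with hEntCand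
  set PrefCand : Finset ℝ := ((grid n).filter fun q => (∑ i ∈ Finset.Icc 1 q.2, g i q.1) < 0).image
    (fun q => (Pref x q.1 q.2 - ((D.filter fun b => b.2 = q.1 ∧ b.1 ≤ q.2).card : ℝ))
      / (- ∑ i ∈ Finset.Icc 1 q.2, g i q.1)) with hPrefCand
  have hp₁grid : p₁ ∈ grid n := Finset.mem_of_mem_filter _ hp₁F
  have hCne : (EntCand ∪ PrefCand).Nonempty := by
    have h : (if 0 < g p₁.1 p₁.2 then (1 - x p₁.1 p₁.2) / g p₁.1 p₁.2
        else x p₁.1 p₁.2 / (- g p₁.1 p₁.2)) ∈ EntCand := by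
      rw [hEntCand]
      apply Finset.mem_image_of_mem
      rw [Finset.mem_filter]
      exact ⟨hp₁grid, hp₁ne⟩
    exact ⟨_, Finset.mem_union_left _ h⟩
  set tstar := (EntCand ∪ PrefCand).min' hCne with htstar
  have hpos : ∀ c ∈ EntCand ∪ PrefCand, 0 < c := by
    intro c hc
    rw [Finset.mem_union] at hc
    rcases hc with hc | hc
    · rw [hEntCand, Finset.mem_image] at hc
      obtain ⟨p, hp, rfl⟩ := hc
      rw [Finset.mem_filter] at hp
      obtain ⟨hx0, hx1⟩ := hopen p (hfrac_of_g p hp.2)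
      by_cases hg : 0 < g p.1 p.2
      · rw [if_pos hg]
        apply div_pos (by linarith) hg
      · rw [if_neg hg]
        have hg' : g p.1 p.2 < 0 := lt_of_le_of_ne (not_lt.1 hg) hp.2
        apply div_pos (by linarith) (by linarith)
    · rw [hPrefCand, Finset.mem_image] at hc
      obtain ⟨q, hq, rfl⟩ := hc
      rw [Finset.mem_filter] at hq
      have hqg := hq.1
      rw [grid, Finset.mem_product, Finset.mem_Icc, Finset.mem_Icc] at hqg
      have hfr : ¬ IsIntR (Pref x q.1 q.2) :=
        hGfrac q.1 q.2 hqg.2.2 (ne_of_lt hq.2)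
      have hge : ((D.filter fun b => b.2 = q.1 ∧ b.1 ≤ q.2).card : ℝ) ≤ Pref x q.1 q.2 :=
        hx.2.2 q.1 (Finset.mem_Icc.2 hqg.1) q.2 (Finset.mem_Icc.2 hqg.2)
      have hneq : Pref x q.1 q.2 ≠ ((D.filter fun b => b.2 = q.1 ∧ b.1 ≤ q.2).card : ℝ) := by
        intro h
        exact hfr (h ▸ isIntR_natCast _)
      apply div_pos
      · rcases lt_or_eq_of_le hge with h | h
        · linarith
        · exact absurd h.symm hneq
      · linarith [hq.2]
  have htpos : 0 < tstar := hpos _ (Finset.min'_mem _ _)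
  have htle : ∀ c ∈ EntCand ∪ PrefCand, tstar ≤ c := fun c hc => Finset.min'_le _ c hc
  -- the new point
  set x' : ℕ → ℕ → ℝ := fun i j => x i j + tstar * g i j with hx'def
  have hx'val : ∀ i j, x' i j = x i j + tstar * g i j := fun i j => rfl
  have hub : ∀ p : ℕ × ℕ, p ∈ grid n → 0 < g p.1 p.2 → x' p.1 p.2 ≤ 1 := by
    intro p hpg hg
    have hc : (1 - x p.1 p.2) / g p.1 p.2 ∈ EntCand ∪ PrefCand := by
      apply Finset.mem_union_left
      rw [hEntCand]
      have : (if 0 < g p.1 p.2 then (1 - x p.1 p.2) / g p.1 p.2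
          else x p.1 p.2 / (- g p.1 p.2)) = (1 - x p.1 p.2) / g p.1 p.2 := if_pos hg
      rw [← this]
      exact Finset.mem_image_of_mem _ (Finset.mem_filter.2 ⟨hpg, ne_of_gt hg⟩)
    have h1 : tstar * g p.1 p.2 ≤ ((1 - x p.1 p.2) / g p.1 p.2) * g p.1 p.2 :=
      mul_le_mul_of_nonneg_right (htle _ hc) (le_of_lt hg)
    rw [div_mul_cancel₀ _ (ne_of_gt hg)] at h1
    rw [hx'val]
    linarith
  have hlb : ∀ p : ℕ × ℕ, p ∈ grid n → g p.1 p.2 < 0 → 0 ≤ x' p.1 p.2 := by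
    intro p hpg hg
    have hc : x p.1 p.2 / (- g p.1 p.2) ∈ EntCand ∪ PrefCand := by
      apply Finset.mem_union_left
      rw [hEntCand]
      have : (if 0 < g p.1 p.2 then (1 - x p.1 p.2) / g p.1 p.2
          else x p.1 p.2 / (- g p.1 p.2)) = x p.1 p.2 / (- g p.1 p.2) :=
        if_neg (not_lt.2 (le_of_lt hg))
      rw [← this]
      exact Finset.mem_image_of_mem _ (Finset.mem_filter.2 ⟨hpg, ne_of_lt hg⟩)
    have h1 : tstar * (- g p.1 p.2) ≤ (x p.1 p.2 / (- g p.1 p.2)) * (- g p.1 p.2) :=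
      mul_le_mul_of_nonneg_right (htle _ hc) (by linarith)
    rw [div_mul_cancel₀ _ (by linarith : - g p.1 p.2 ≠ 0)] at h1
    rw [hx'val]
    linarith
  have hprefb : ∀ j s, j ∈ Finset.Icc 1 n → s ∈ Finset.Icc 1 n →
      (∑ i ∈ Finset.Icc 1 s, g i j) < 0 →
      ((D.filter fun b => b.2 = j ∧ b.1 ≤ s).card : ℝ)
        ≤ Pref x j s + tstar * (∑ i ∈ Finset.Icc 1 s, g i j) := by
    intro j s hj hs hG
    have hqg : (j, s) ∈ grid n := by
      rw [grid, Finset.mem_product]; exact ⟨hj, hs⟩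
    have hc : (Pref x j s - ((D.filter fun b => b.2 = j ∧ b.1 ≤ s).card : ℝ))
        / (- ∑ i ∈ Finset.Icc 1 s, g i j) ∈ EntCand ∪ PrefCand := by
      apply Finset.mem_union_right
      rw [hPrefCand]
      exact Finset.mem_image_of_mem _ (Finset.mem_filter.2 ⟨hqg, hG⟩)
    have h1 : tstar * (- ∑ i ∈ Finset.Icc 1 s, g i j)
        ≤ ((Pref x j s - ((D.filter fun b => b.2 = j ∧ b.1 ≤ s).card : ℝ))
            / (- ∑ i ∈ Finset.Icc 1 s, g i j)) * (- ∑ i ∈ Finset.Icc 1 s, g i j) :=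
      mul_le_mul_of_nonneg_right (htle _ hc) (by linarith)
    rw [div_mul_cancel₀ _ (by linarith : (- ∑ i ∈ Finset.Icc 1 s, g i j) ≠ 0)] at h1
    linarith
  have hx' : InP n D αr x' := by
    refine ⟨?_, ?_, ?_⟩
    · intro i hi j hj
      have hpg : ((i, j) : ℕ × ℕ) ∈ grid n := by
        rw [grid, Finset.mem_product]; exact ⟨hi, hj⟩
      have hb := hx.1 i hi j hj
      rcases lt_trichotomy (g i j) 0 with hg | hg | hg
      · constructor
        · exact hlb (i, j) hpg hg
        · rw [hx'val]
          nlinarith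
      · rw [hx'val, hg]
        constructor <;> nlinarith
      · constructor
        · rw [hx'val]
          nlinarith
        · exact hub (i, j) hpg hg
    · intro i hi
      have : ∑ j ∈ Finset.Icc 1 n, x' i j
          = (∑ j ∈ Finset.Icc 1 n, x i j) + tstar * ∑ j ∈ Finset.Icc 1 n, g i j := by
        rw [Finset.mul_sum, ← Finset.sum_add_distrib]
      rw [this, hgrow i, hx.2.1 i hi, mul_zero, add_zero]
    · intro j hj s hs
      have hsum' : ∑ i ∈ Finset.Icc 1 s, x' i j
          = Pref x j s + tstar * ∑ i ∈ Finset.Icc 1 s, g i j := by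
        rw [Pref, Finset.mul_sum, ← Finset.sum_add_distrib]
      rw [hsum']
      by_cases hG : (∑ i ∈ Finset.Icc 1 s, g i j) < 0
      · exact hprefb j s hj hs hG
      · have h1 := hx.2.2 j hj s hs
        rw [← Pref] at h1
        nlinarith [not_lt.1 hG]
  -- the measure decreases
  have hPrefx' : ∀ j s, Pref x' j s = Pref x j s + tstar * ∑ i ∈ Finset.Icc 1 s, g i j := by
    intro j s
    rw [Pref, Pref, Finset.mul_sum, ← Finset.sum_add_distrib]
  have hFsub : FracEnt n x' ⊆ FracEnt n x := by
    intro p hp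
    rw [FracEnt, Finset.mem_filter] at hp
    by_cases hg : g p.1 p.2 = 0
    · rw [FracEnt, Finset.mem_filter]
      refine ⟨hp.1, ?_⟩
      have : x' p.1 p.2 = x p.1 p.2 := by rw [hx'val, hg, mul_zero, add_zero]
      rw [← this]
      exact hp.2
    · exact hfrac_of_g p hg
  have hPsub : FracPref n x' ⊆ FracPref n x := by
    intro q hq
    rw [FracPref, Finset.mem_filter] at hq
    have hqg := hq.1
    rw [FracPref, Finset.mem_filter]
    refine ⟨hqg, ?_⟩
    by_cases hG : (∑ i ∈ Finset.Icc 1 q.2, g i q.1) = 0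
    · have : Pref x' q.1 q.2 = Pref x q.1 q.2 := by
        rw [hPrefx', hG, mul_zero, add_zero]
      rw [← this]
      exact hq.2
    · have hq2 : q.2 ≤ n := by
        rw [grid, Finset.mem_product, Finset.mem_Icc, Finset.mem_Icc] at hqg
        exact hqg.2.2
      exact hGfrac q.1 q.2 hq2 hG
  have hmin_mem := Finset.min'_mem _ hCne
  rw [← htstar, Finset.mem_union] at hmin_mem
  refine ⟨x', hx', ?_⟩
  rcases hmin_mem with hm | hm
  · -- an entry becomes integral
    rw [hEntCand, Finset.mem_image] at hm
    obtain ⟨p, hp, hpt⟩ := hm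
    rw [Finset.mem_filter] at hp
    have hpF : p ∈ FracEnt n x := hfrac_of_g p hp.2
    have hint' : IsIntR (x' p.1 p.2) := by
      by_cases hg : 0 < g p.1 p.2
      · rw [if_pos hg] at hpt
        have : x' p.1 p.2 = 1 := by
          rw [hx'val, ← hpt, div_mul_cancel₀ _ (ne_of_gt hg)]
          ring
        rw [this]; exact isIntR_one
      · rw [if_neg hg] at hpt
        have hg' : g p.1 p.2 < 0 := lt_of_le_of_ne (not_lt.1 hg) hp.2
        have : x' p.1 p.2 = 0 := by
          rw [hx'val, ← hpt]
          have hne0 : - g p.1 p.2 ≠ 0 := by linarith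
          field_simp
          rw [div_self hp.2]; ring
        rw [this]; exact isIntR_zero
    have hpnot : p ∉ FracEnt n x' := by
      rw [FracEnt, Finset.mem_filter]
      intro h
      exact h.2 hint'
    have hss : FracEnt n x' ⊂ FracEnt n x :=
      (Finset.ssubset_iff_of_subset hFsub).2 ⟨p, hpF, hpnot⟩
    have h1 := Finset.card_lt_card hss
    have h2 := Finset.card_le_card hPsub
    rw [mu, mu]
    omega
  · -- a prefix sum becomes integral
    rw [hPrefCand, Finset.mem_image] at hm
    obtain ⟨q, hq, hqt⟩ := hm
    rw [Finset.mem_filter] at hq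
    have hq2 : q.2 ≤ n := by
      have := hq.1
      rw [grid, Finset.mem_product, Finset.mem_Icc, Finset.mem_Icc] at this
      exact this.2.2
    have hqF : q ∈ FracPref n x := by
      rw [FracPref, Finset.mem_filter]
      exact ⟨hq.1, hGfrac q.1 q.2 hq2 (ne_of_lt hq.2)⟩
    have hint' : IsIntR (Pref x' q.1 q.2) := by
      have hG := hq.2
      have : Pref x' q.1 q.2 = ((D.filter fun b => b.2 = q.1 ∧ b.1 ≤ q.2).card : ℝ) := by
        rw [hPrefx', ← hqt]
        have hne0 : - (∑ i ∈ Finset.Icc 1 q.2, g i q.1) ≠ 0 := by linarith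
        field_simp
        ring
        simp only [mul_assoc, mul_inv_cancel₀ (ne_of_lt hG), mul_one]; ring
      rw [this]
      exact isIntR_natCast _
    have hqnot : q ∉ FracPref n x' := by
      rw [FracPref, Finset.mem_filter]
      intro h
      exact h.2 hint'
    have hss : FracPref n x' ⊂ FracPref n x :=
      (Finset.ssubset_iff_of_subset hPsub).2 ⟨q, hqF, hqnot⟩
    have h1 := Finset.card_lt_card hss
    have h2 := Finset.card_le_card hFsub
    rw [mu, mu]
    omega

/-- Iterating the step lemma produces an integral feasible point. -/
lemma exists_integral (n : ℕ) (D : Finset (ℕ × ℕ)) (hD : D ⊆ grid n) (αr : ℕ → ℝ)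
    (hαint : ∀ i ∈ Finset.Icc 1 n, IsIntR (αr i))
    (hsumr : ∑ i ∈ Finset.Icc 1 n, αr i = (D.card : ℝ)) :
    ∀ N : ℕ, ∀ x : ℕ → ℕ → ℝ, mu n x ≤ N → InP n D αr x →
      ∃ x' : ℕ → ℕ → ℝ, InP n D αr x' ∧
        ∀ i ∈ Finset.Icc 1 n, ∀ j ∈ Finset.Icc 1 n, ∃ z : ℤ, x' i j = (z : ℝ) := by
  intro N
  induction N with
  | zero =>
    intro x hmu hx
    refine ⟨x, hx, ?_⟩
    intro i hi j hj
    have hcard : (FracEnt n x).card = 0 := by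
      rw [mu] at hmu; omega
    have hnotin : ((i, j) : ℕ × ℕ) ∉ FracEnt n x := by
      rw [Finset.card_eq_zero] at hcard
      rw [hcard]
      exact Finset.notMem_empty _
    rw [FracEnt, Finset.mem_filter] at hnotin
    push_neg at hnotin
    have hgrid : ((i, j) : ℕ × ℕ) ∈ grid n := by
      rw [grid, Finset.mem_product]; exact ⟨hi, hj⟩
    exact hnotin hgrid
  | succ N ih =>
    intro x hmu hx
    by_cases hne : (FracEnt n x).Nonempty
    · obtain ⟨x', hx', hlt⟩ := step_lemma n D hD αr hαint hsumr x hx hne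
      exact ih x' (by omega) hx'
    · refine ⟨x, hx, ?_⟩
      intro i hi j hj
      rw [Finset.not_nonempty_iff_eq_empty] at hne
      have hnotin : ((i, j) : ℕ × ℕ) ∉ FracEnt n x := by
        rw [hne]; exact Finset.notMem_empty _
      rw [FracEnt, Finset.mem_filter] at hnotin
      push_neg at hnotin
      have hgrid : ((i, j) : ℕ × ℕ) ∈ grid n := by
        rw [grid, Finset.mem_product]; exact ⟨hi, hj⟩
      exact hnotin hgrid

/-- If `α₁+⋯+α_n = #D` then `P(D,α)` contains an integer point iff it is nonempty. -/
theorem inP_integer_iff_nonempty (n : ℕ) (D : Finset (ℕ × ℕ)) (hD : D ⊆ grid n)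
    (α : ℕ → ℤ) (hsum : (∑ i ∈ Finset.Icc 1 n, α i) = D.card) :
    (∃ x : ℕ → ℕ → ℝ, InP n D (fun i => (α i : ℝ)) x ∧
        ∀ i ∈ Finset.Icc 1 n, ∀ j ∈ Finset.Icc 1 n, ∃ z : ℤ, x i j = (z : ℝ)) ↔
      (∃ x : ℕ → ℕ → ℝ, InP n D (fun i => (α i : ℝ)) x) := by
  constructor
  · rintro ⟨x, hx, -⟩
    exact ⟨x, hx⟩
  · rintro ⟨x, hx⟩
    have hαint : ∀ i ∈ Finset.Icc 1 n, IsIntR ((α i : ℝ)) := fun i _ => isIntR_intCast _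
    have hsumr : ∑ i ∈ Finset.Icc 1 n, ((α i : ℝ)) = (D.card : ℝ) := by
      rw [← Int.cast_natCast, ← hsum]
      push_cast
      rfl
    obtain ⟨x', hx', hint⟩ :=
      exists_integral n D hD (fun i => (α i : ℝ)) hαint hsumr (mu n x) x le_rfl hx
    exact ⟨x', hx', hint⟩

end

end Schub
end

section
/- The constraint matrix M of the polytope P(D,α), built by stacking −I_{n²}, I_{n²}, the content-condition block (I_n I_n ⋯ I_n), and the block-diagonal flag-condition matrix with n lower-triangular blocks all of whose entries on or below the diagonal equal −1, is totally unimodular: every square minor of M lies in {0, 1, −1}. -/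
namespace Schub

open Matrix Finset

lemma signRange_iff {x : ℤ} :
    x ∈ Set.range (SignType.cast : SignType → ℤ) ↔ x = 0 ∨ x = 1 ∨ x = -1 := by
  constructor
  · rintro ⟨s, rfl⟩; cases s <;> simp
  · rintro (rfl | rfl | rfl)
    exacts [⟨0, by simp⟩, ⟨1, by simp⟩, ⟨-1, by simp⟩]

/-- `unitOpt u` is the indicator vector of the optional index `u`. -/
def unitOpt {k : ℕ} (u : Option (Fin k)) : Fin k → ℤ := fun i => if u = some i then 1 else 0

lemma sum_unitOpt_some {k : ℕ} (p : Fin k) : ∑ i, unitOpt (some p) i = 1 := by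
  simp [unitOpt]

lemma sum_unitOpt_none {k : ℕ} : ∑ i : Fin k, unitOpt (none : Option (Fin k)) i = 0 := by
  simp [unitOpt]

/-- pull back an optional index along `Fin.succAbove i0`. -/
noncomputable def pull {k : ℕ} (i0 : Fin (k + 1)) (u : Option (Fin (k + 1))) : Option (Fin k) :=
  u.bind fun x => if h : ∃ i, i0.succAbove i = x then some h.choose else none

lemma unitOpt_pull {k : ℕ} (i0 : Fin (k + 1)) (u : Option (Fin (k + 1))) (i : Fin k) :
    unitOpt (pull i0 u) i = unitOpt u (i0.succAbove i) := by
  cases u with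
  | none => rfl
  | some x =>
    have hrw : pull i0 (some x)
        = if h : ∃ i', i0.succAbove i' = x then some h.choose else none := rfl
    rw [hrw]
    by_cases h : ∃ i', i0.succAbove i' = x
    · rw [dif_pos h]
      have hx := h.choose_spec
      simp only [unitOpt, Option.some.injEq]
      by_cases hxi : x = i0.succAbove i
      · rw [if_pos hxi, if_pos (i0.succAbove_right_injective (hx.trans hxi))]
      · rw [if_neg hxi, if_neg]
        intro hh
        exact hxi (by rw [← hx, hh])
    · rw [dif_neg h]
      simp only [unitOpt]
      rw [if_neg (by simp), if_neg]
      intro hh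
      exact h ⟨i, ((Option.some.injEq _ _).mp hh).symm⟩

lemma det_mem_of_goodCols : ∀ (k : ℕ) (X : Matrix (Fin k) (Fin k) ℤ),
    (∀ j, ∃ u v : Option (Fin k), ∀ i, X i j = unitOpt u i - unitOpt v i) →
    X.det ∈ Set.range (SignType.cast : SignType → ℤ) := by
  intro k
  induction k with
  | zero => intro X _; exact ⟨1, by simp⟩
  | succ k ih =>
    intro X hX
    by_cases h1 : ∃ (j i0 : Fin (k + 1)) (ε : ℤ), (ε = 1 ∨ ε = -1) ∧
        ∀ i, X i j = if i = i0 then ε else 0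
    · obtain ⟨j, i0, ε, hε, hcol⟩ := h1
      rw [det_succ_column X j, Finset.sum_eq_single i0]
      · have hmm := ih (X.submatrix i0.succAbove j.succAbove) ?_
        · rw [signRange_iff] at hmm ⊢
          rw [hcol i0, if_pos rfl]
          have hpow : (-1 : ℤ) ^ ((i0 : ℕ) + (j : ℕ)) = 1 ∨
              (-1 : ℤ) ^ ((i0 : ℕ) + (j : ℕ)) = -1 := neg_one_pow_eq_or ℤ _
          rcases hpow with hp | hp <;> rcases hε with rfl | rfl <;>
            rcases hmm with hd | hd | hd <;> rw [hp, hd] <;> norm_num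
        · intro c
          obtain ⟨u, v, hc⟩ := hX (j.succAbove c)
          exact ⟨pull i0 u, pull i0 v, fun i => by
            rw [Matrix.submatrix_apply, hc, unitOpt_pull, unitOpt_pull]⟩
      · intro b _ hb
        rw [hcol b, if_neg hb, mul_zero, zero_mul]
      · intro hb; exact absurd (Finset.mem_univ i0) hb
    · have hz : ∀ j, ∑ i, X i j = 0 := by
        intro j
        obtain ⟨u, v, hc⟩ := hX j
        rcases u with _ | p <;> rcases v with _ | q
        · simp only [hc]; rw [Finset.sum_congr rfl fun i _ => rfl]
          simp [unitOpt]
        · exact absurd ⟨j, q, -1, Or.inr rfl, fun i => by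
            rw [hc i]
            rcases eq_or_ne i q with rfl | hq
            · simp [unitOpt]
            · simp [unitOpt, hq, Ne.symm hq]⟩ h1
        · exact absurd ⟨j, p, 1, Or.inl rfl, fun i => by
            rw [hc i]
            rcases eq_or_ne i p with rfl | hp
            · simp [unitOpt]
            · simp [unitOpt, hp, Ne.symm hp]⟩ h1
        · rw [Finset.sum_congr rfl fun i _ => hc i, Finset.sum_sub_distrib,
            sum_unitOpt_some, sum_unitOpt_some, sub_self]
      have hdet : X.det = 0 := by
        apply Matrix.exists_vecMul_eq_zero_iff.mp
        refine ⟨fun _ => 1, ?_, ?_⟩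
        · intro h0
          have := congrFun h0 0
          simp at this
        · funext j
          simpa [Matrix.vecMul, dotProduct] using hz j
      rw [hdet]; exact ⟨0, by simp⟩

/-- The core block: content rows stacked on flag rows. -/
def Bmat (n : ℕ) : Matrix (Fin n ⊕ (Fin n × Fin n)) (Fin n × Fin n) ℤ :=
  fun r q =>
    match r with
    | Sum.inl i => if q.1 = i then 1 else 0
    | Sum.inr sj => if q.2 = sj.2 ∧ q.1 ≤ sj.1 then -1 else 0

section Core

variable {n k : ℕ}

/-- a key measuring the flag level of a selected row. -/
def rkey (f : Fin k → Fin n ⊕ (Fin n × Fin n)) (r : Fin k) : ℕ :=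
  match f r with
  | Sum.inl _ => 0
  | Sum.inr sj => (sj.1 : ℕ) + 1

/-- `r'` is a flag row in the same block as `r` with strictly smaller level. -/
def isPred (f : Fin k → Fin n ⊕ (Fin n × Fin n)) (r r' : Fin k) : Prop :=
  ∃ s s' j, f r = Sum.inr (s, j) ∧ f r' = Sum.inr (s', j) ∧ s' < s

lemma rkey_eq_of_inr {f : Fin k → Fin n ⊕ (Fin n × Fin n)} {r : Fin k} {s : Fin n} {j : Fin n}
    (h : f r = Sum.inr (s, j)) : rkey f r = (s : ℕ) + 1 := by
  simp [rkey, h]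

lemma rkey_lt_of_isPred {f : Fin k → Fin n ⊕ (Fin n × Fin n)} {r r' : Fin k}
    (h : isPred f r r') : rkey f r' < rkey f r := by
  obtain ⟨s, s', j, hr, hr', hlt⟩ := h
  rw [rkey_eq_of_inr hr, rkey_eq_of_inr hr']
  omega

open Classical in
/-- the selected flag row in the same block with largest level below that of `r`. -/
noncomputable def predOpt (f : Fin k → Fin n ⊕ (Fin n × Fin n)) (r : Fin k) : Option (Fin k) :=
  if h : (Finset.univ.filter (fun r' => isPred f r r')).Nonempty then
    some (Finset.exists_max_image _ (rkey f) h).choose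
  else none

lemma predOpt_spec {f : Fin k → Fin n ⊕ (Fin n × Fin n)} {r p : Fin k}
    (h : predOpt f r = some p) :
    isPred f r p ∧ ∀ r', isPred f r r' → rkey f r' ≤ rkey f p := by
  classical
  unfold predOpt at h
  split at h
  · next hne =>
    obtain ⟨hmem, hmax⟩ :=
      (Finset.exists_max_image (Finset.univ.filter fun r' => isPred f r r')
        (rkey f) hne).choose_spec
    obtain rfl := Option.some.inj h
    exact ⟨(Finset.mem_filter.mp hmem).2,
      fun r' hr' => hmax r' (Finset.mem_filter.mpr ⟨Finset.mem_univ _, hr'⟩)⟩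
  · exact absurd h (by simp)

lemma predOpt_none {f : Fin k → Fin n ⊕ (Fin n × Fin n)} {r : Fin k}
    (h : predOpt f r = none) : ∀ r', ¬ isPred f r r' := by
  classical
  unfold predOpt at h
  split at h
  · exact absurd h (by simp)
  · next hne =>
    intro r' hr'
    exact hne ⟨r', by simp [hr']⟩

lemma predOpt_isSome {f : Fin k → Fin n ⊕ (Fin n × Fin n)} {r r' : Fin k}
    (h : isPred f r r') : ∃ p, predOpt f r = some p := by
  classical
  unfold predOpt
  rw [dif_pos ⟨r', by simp [h]⟩]
  exact ⟨_, rfl⟩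

end Core

section Tpart

variable {n k : ℕ}

/-- The unitriangular row transformation: subtract the predecessor flag row. -/
noncomputable def Tmat (f : Fin k → Fin n ⊕ (Fin n × Fin n)) : Matrix (Fin k) (Fin k) ℤ :=
  fun r r' => (if r' = r then 1 else 0) + (if predOpt f r = some r' then -1 else 0)

lemma Tmat_blockTriangular (f : Fin k → Fin n ⊕ (Fin n × Fin n)) :
    (Tmat f).BlockTriangular (fun r => OrderDual.toDual (rkey f r)) := by
  intro r r' h
  have hk : rkey f r < rkey f r' := h
  unfold Tmat
  rw [if_neg, if_neg, add_zero]
  · intro hp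
    exact absurd (rkey_lt_of_isPred (predOpt_spec hp).1) (by omega)
  · rintro rfl
    exact lt_irrefl _ hk

lemma det_Tmat (f : Fin k → Fin n ⊕ (Fin n × Fin n)) : (Tmat f).det = 1 := by
  rw [(Tmat_blockTriangular f).det]
  apply Finset.prod_eq_one
  intro a _
  have h1 : (Tmat f).toSquareBlock (fun r => OrderDual.toDual (rkey f r)) a = 1 := by
    ext r r'
    simp only [Matrix.toSquareBlock_def]
    rcases eq_or_ne r r' with rfl | hne
    · have : ¬ predOpt f (r : Fin k) = some (r : Fin k) := by
        intro hp
        exact absurd (rkey_lt_of_isPred (predOpt_spec hp).1) (lt_irrefl _)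
      simp [Tmat, this]
    · have hkey : rkey f (r : Fin k) = rkey f (r' : Fin k) := by
        have := r.2.trans r'.2.symm
        exact OrderDual.toDual_inj.mp this
      have h2 : ¬ predOpt f (r : Fin k) = some (r' : Fin k) := by
        intro hp
        exact absurd (rkey_lt_of_isPred (predOpt_spec hp).1) (by omega)
      have h3 : ¬ (r' : Fin k) = (r : Fin k) := fun hh => hne (Subtype.ext hh.symm)
      simp [Tmat, h2, h3, Matrix.one_apply, fun hh : r = r' => hne hh]
  rw [h1, Matrix.det_one]

lemma Tmat_mul_apply (f : Fin k → Fin n ⊕ (Fin n × Fin n)) (S : Matrix (Fin k) (Fin k) ℤ)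
    (r c : Fin k) :
    (Tmat f * S) r c = S r c - (predOpt f r).elim 0 (fun p => S p c) := by
  rw [Matrix.mul_apply]
  have hsplit : ∀ r', Tmat f r r' * S r' c =
      (if r' = r then S r' c else 0) + (if predOpt f r = some r' then -S r' c else 0) := by
    intro r'
    unfold Tmat
    rw [add_mul]
    congr 1
    · split <;> simp
    · split <;> simp
  rw [Finset.sum_congr rfl fun r' _ => hsplit r', Finset.sum_add_distrib]
  congr 1
  · simp
  · rcases hp : predOpt f r with _ | p
    · simp
    · rw [Finset.sum_eq_single p]
      · simp
      · intro b _ hb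
        rw [if_neg]
        simp [hb.symm]
      · intro hb; exact absurd (Finset.mem_univ p) hb

end Tpart

theorem Bmat_isTotallyUnimodular (n : ℕ) : (Bmat n).IsTotallyUnimodular := by
  classical
  intro k f g hf hg
  set S := (Bmat n).submatrix f g with hSdef
  have hdet : S.det = (Tmat f * S).det := by
    rw [Matrix.det_mul, det_Tmat, one_mul]
  rw [hdet]
  apply det_mem_of_goodCols
  intro c
  rcases hq : g c with ⟨i, j⟩
  suffices H : ∀ u v : Option (Fin k),
      (∀ r, u = some r ↔ f r = Sum.inl i) →
      (∀ p, v = some p → ∃ s, f p = Sum.inr (s, j) ∧ i ≤ s) →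
      (∀ p, v = some p → ∀ r' s', f r' = Sum.inr (s', j) → i ≤ s' → rkey f p ≤ rkey f r') →
      ((∃ r s, f r = Sum.inr (s, j) ∧ i ≤ s) → ∃ p, v = some p) →
      ∀ r, (Tmat f * S) r c = unitOpt u r - unitOpt v r by
    by_cases hu : ∃ r, f r = Sum.inl i
    · obtain ⟨r0, hr0⟩ := hu
      by_cases hV : (Finset.univ.filter fun r => ∃ s : Fin n, f r = Sum.inr (s, j) ∧ i ≤ s).Nonempty
      · obtain ⟨p0, hp0mem, hp0min⟩ := Finset.exists_min_image _ (rkey f) hV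
        refine ⟨some r0, some p0, H _ _ ?_ ?_ ?_ ?_⟩
        · intro r
          constructor
          · rintro h; obtain rfl := Option.some.inj h; exact hr0
          · intro h; exact congrArg some (hf (hr0.trans h.symm))
        · intro p hp; obtain rfl := Option.some.inj hp
          exact (Finset.mem_filter.mp hp0mem).2
        · intro p hp r' s' hr' hs'; obtain rfl := Option.some.inj hp
          exact hp0min r' (Finset.mem_filter.mpr ⟨Finset.mem_univ _, s', hr', hs'⟩)
        · exact fun _ => ⟨p0, rfl⟩
      · refine ⟨some r0, none, H _ _ ?_ ?_ ?_ ?_⟩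
        · intro r
          constructor
          · rintro h; obtain rfl := Option.some.inj h; exact hr0
          · intro h; exact congrArg some (hf (hr0.trans h.symm))
        · intro p hp; exact absurd hp (by simp)
        · intro p hp; exact absurd hp (by simp)
        · rintro ⟨r, s, hrs, his⟩
          exact absurd ⟨r, Finset.mem_filter.mpr ⟨Finset.mem_univ _, s, hrs, his⟩⟩ hV
    · by_cases hV : (Finset.univ.filter fun r => ∃ s : Fin n, f r = Sum.inr (s, j) ∧ i ≤ s).Nonempty
      · obtain ⟨p0, hp0mem, hp0min⟩ := Finset.exists_min_image _ (rkey f) hV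
        refine ⟨none, some p0, H _ _ ?_ ?_ ?_ ?_⟩
        · intro r
          constructor
          · intro h; exact absurd h (by simp)
          · intro h; exact absurd ⟨r, h⟩ hu
        · intro p hp; obtain rfl := Option.some.inj hp
          exact (Finset.mem_filter.mp hp0mem).2
        · intro p hp r' s' hr' hs'; obtain rfl := Option.some.inj hp
          exact hp0min r' (Finset.mem_filter.mpr ⟨Finset.mem_univ _, s', hr', hs'⟩)
        · exact fun _ => ⟨p0, rfl⟩
      · refine ⟨none, none, H _ _ ?_ ?_ ?_ ?_⟩
        · intro r
          constructor
          · intro h; exact absurd h (by simp)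
          · intro h; exact absurd ⟨r, h⟩ hu
        · intro p hp; exact absurd hp (by simp)
        · intro p hp; exact absurd hp (by simp)
        · rintro ⟨r, s, hrs, his⟩
          exact absurd ⟨r, Finset.mem_filter.mpr ⟨Finset.mem_univ _, s, hrs, his⟩⟩ hV
  intro u v hu hvmem hvmin hvsome r
  rw [Tmat_mul_apply]
  have hScq : ∀ r', S r' c = Bmat n (f r') (i, j) := by
    intro r'; rw [hSdef, Matrix.submatrix_apply, hq]
  rcases hr : f r with i' | ⟨s, j'⟩
  · -- content row
    have hpred : predOpt f r = none := by
      rcases hp : predOpt f r with _ | p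
      · rfl
      · obtain ⟨⟨s, s', jj, hra, _, _⟩, _⟩ := predOpt_spec hp
        rw [hr] at hra; exact absurd hra (by simp)
    rw [hpred]
    have hvr : unitOpt v r = 0 := by
      unfold unitOpt
      rw [if_neg]
      intro hvv
      obtain ⟨s, hps, _⟩ := hvmem r hvv
      rw [hr] at hps; exact absurd hps (by simp)
    rw [hvr, hScq r, hr]
    show (if (i, j).1 = i' then (1 : ℤ) else 0) - 0 = unitOpt u r - 0
    unfold unitOpt
    by_cases hii : i = i'
    · rw [if_pos hii, if_pos ((hu r).mpr (by rw [hr, hii]))]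
    · rw [if_neg hii, if_neg]
      intro h
      have hfi := (hu r).mp h
      rw [hr] at hfi
      exact hii (Sum.inl.inj hfi).symm
  · -- flag row : f r = Sum.inr (s, j')
    have huru : unitOpt u r = 0 := by
      unfold unitOpt
      rw [if_neg]
      intro h
      have hfi := (hu r).mp h
      rw [hr] at hfi
      exact absurd hfi (by simp)
    by_cases hjj : j = j'
    · subst hjj
      by_cases his : i ≤ s
      · obtain ⟨p0, hv⟩ := hvsome ⟨r, s, hr, his⟩
        obtain ⟨s0, hp0, his0⟩ := hvmem p0 hv
        by_cases hrp : r = p0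
        · have hvr : unitOpt v r = 1 := by
            unfold unitOpt
            rw [if_pos (by rw [hv, hrp])]
          have helim : (predOpt f r).elim 0 (fun p => S p c) = 0 := by
            rcases hp : predOpt f r with _ | p
            · rfl
            · obtain ⟨⟨sa, s'', jb, hra, hpa, hlt⟩, hmax⟩ := predOpt_spec hp
              rw [hr] at hra
              obtain ⟨rfl, rfl⟩ := Prod.mk.inj (Sum.inr.inj hra)
              show S p c = 0
              rw [hScq p, hpa]
              show (if (i, j).2 = j ∧ (i, j).1 ≤ s'' then (-1 : ℤ) else 0) = 0
              rw [if_neg]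
              rintro ⟨-, hle⟩
              have hfr : f p0 = Sum.inr (s, j) := by rw [← hrp]; exact hr
              have hmin := hvmin p0 hv p s'' hpa hle
              rw [rkey_eq_of_inr hfr, rkey_eq_of_inr hpa] at hmin
              have hlt' : (s'' : ℕ) < (s : ℕ) := hlt
              omega
          rw [helim, huru, hvr, hScq r, hr]
          show (if (i, j).2 = j ∧ (i, j).1 ≤ s then (-1 : ℤ) else 0) - 0 = 0 - 1
          rw [if_pos ⟨rfl, his⟩]
          norm_num
        · have hvr : unitOpt v r = 0 := by
            unfold unitOpt
            rw [if_neg]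
            intro h
            exact hrp (Option.some.inj (hv.symm.trans h)).symm
          have hs0s : s0 < s := by
            have h1 := hvmin p0 hv r s hr his
            rw [rkey_eq_of_inr hp0, rkey_eq_of_inr hr] at h1
            have h2 : s0 ≠ s := by
              rintro rfl
              exact hrp (hf (hr.trans hp0.symm))
            have h3 : (s0 : ℕ) ≠ (s : ℕ) := fun hh => h2 (Fin.ext hh)
            exact Fin.lt_def.mpr (by omega)
          obtain ⟨p, hp⟩ := predOpt_isSome ⟨s, s0, j, hr, hp0, hs0s⟩
          obtain ⟨⟨sa, s'', jb, hra, hpa, hlt⟩, hmax⟩ := predOpt_spec hp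
          rw [hr] at hra
          obtain ⟨rfl, rfl⟩ := Prod.mk.inj (Sum.inr.inj hra)
          have hmax0 := hmax p0 ⟨s, s0, j, hr, hp0, hs0s⟩
          rw [rkey_eq_of_inr hp0, rkey_eq_of_inr hpa] at hmax0
          have his'' : i ≤ s'' := by
            have hi0 : (i : ℕ) ≤ (s0 : ℕ) := his0
            exact Fin.le_def.mpr (by omega)
          have helim : (predOpt f r).elim 0 (fun p' => S p' c) = -1 := by
            rw [hp]
            show S p c = -1
            rw [hScq p, hpa]
            show (if (i, j).2 = j ∧ (i, j).1 ≤ s'' then (-1 : ℤ) else 0) = -1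
            rw [if_pos ⟨rfl, his''⟩]
          rw [helim, huru, hvr, hScq r, hr]
          show (if (i, j).2 = j ∧ (i, j).1 ≤ s then (-1 : ℤ) else 0) - -1 = 0 - 0
          rw [if_pos ⟨rfl, his⟩]
          norm_num
      · -- s < i : zero everywhere
        have hvr : unitOpt v r = 0 := by
          unfold unitOpt
          rw [if_neg]
          intro h
          obtain ⟨sbar, hps, hisb⟩ := hvmem r h
          rw [hr] at hps
          obtain ⟨rfl, -⟩ := Prod.mk.inj (Sum.inr.inj hps.symm)
          exact his hisb
        have helim : (predOpt f r).elim 0 (fun p => S p c) = 0 := by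
          rcases hp : predOpt f r with _ | p
          · rfl
          · obtain ⟨⟨sa, s'', jb, hra, hpa, hlt⟩, hmax⟩ := predOpt_spec hp
            rw [hr] at hra
            obtain ⟨rfl, rfl⟩ := Prod.mk.inj (Sum.inr.inj hra)
            show S p c = 0
            rw [hScq p, hpa]
            show (if (i, j).2 = j ∧ (i, j).1 ≤ s'' then (-1 : ℤ) else 0) = 0
            rw [if_neg]
            rintro ⟨-, hle⟩
            have h1 : (i : ℕ) ≤ (s'' : ℕ) := hle
            have h2 : (s'' : ℕ) < (s : ℕ) := hlt
            exact his (Fin.le_def.mpr (by omega))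
        rw [helim, huru, hvr, hScq r, hr]
        show (if (i, j).2 = j ∧ (i, j).1 ≤ s then (-1 : ℤ) else 0) - 0 = 0 - 0
        rw [if_neg fun hh => his hh.2]
    · -- other block : everything is zero
      have hvr : unitOpt v r = 0 := by
        unfold unitOpt
        rw [if_neg]
        intro h
        obtain ⟨sbar, hps, -⟩ := hvmem r h
        rw [hr] at hps
        obtain ⟨-, rfl⟩ := Prod.mk.inj (Sum.inr.inj hps.symm)
        exact hjj rfl
      have helim : (predOpt f r).elim 0 (fun p => S p c) = 0 := by
        rcases hp : predOpt f r with _ | p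
        · rfl
        · obtain ⟨⟨sa, s'', jb, hra, hpa, hlt⟩, hmax⟩ := predOpt_spec hp
          rw [hr] at hra
          obtain ⟨rfl, rfl⟩ := Prod.mk.inj (Sum.inr.inj hra)
          show S p c = 0
          rw [hScq p, hpa]
          show (if (i, j).2 = j' ∧ (i, j).1 ≤ s'' then (-1 : ℤ) else 0) = 0
          rw [if_neg]
          rintro ⟨hh, -⟩
          exact hjj hh
      rw [helim, huru, hvr, hScq r, hr]
      show (if (i, j).2 = j' ∧ (i, j).1 ≤ s then (-1 : ℤ) else 0) - 0 = 0 - 0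
      rw [if_neg fun hh => hjj hh.1]

/-- The constraint matrix `M` of the polytope `P(D,α)`: the stack of `−I_{n²}`,
`I_{n²}`, the content block `(I_n  I_n ⋯ I_n)` (row `i` has a `1` in every column
`(i,j)`), and the block-diagonal flag block (row `(s,j)` has a `−1` in every column
`(i,j)` with `i ≤ s`); columns are indexed by grid positions `(i,j)`. -/
def Mmat (n : ℕ) :
    Matrix ((Fin n × Fin n) ⊕ ((Fin n × Fin n) ⊕ (Fin n ⊕ (Fin n × Fin n))))
      (Fin n × Fin n) ℤ :=
  fun r q =>
    match r with
    | Sum.inl p => if p = q then -1 else 0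
    | Sum.inr (Sum.inl p) => if p = q then 1 else 0
    | Sum.inr (Sum.inr (Sum.inl i)) => if q.1 = i then 1 else 0
    | Sum.inr (Sum.inr (Sum.inr sj)) => if q.2 = sj.2 ∧ q.1 ≤ sj.1 then -1 else 0

/-- The two identity blocks `−I` and `I`. -/
def Umat (n : ℕ) : Matrix ((Fin n × Fin n) ⊕ (Fin n × Fin n)) (Fin n × Fin n) ℤ :=
  fun r q =>
    match r with
    | Sum.inl p => if p = q then -1 else 0
    | Sum.inr p => if p = q then 1 else 0

/-- The constraint matrix `M` of `P(D,α)` is totally unimodular: every square minor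
lies in `{0, 1, −1}`. -/
theorem Mmat_isTotallyUnimodular (n : ℕ) : (Mmat n).IsTotallyUnimodular := by
  classical
  have hBU : (Matrix.fromRows (Bmat n) (Umat n)).IsTotallyUnimodular := by
    apply (Bmat_isTotallyUnimodular n).fromRows_unitlike
    intro _ r
    rcases r with p | p
    · refine ⟨p, -1, funext fun q => ?_⟩
      rw [Pi.single_apply]
      show (if p = q then (-1 : ℤ) else 0) = _
      by_cases h : p = q
      · subst h; simp
      · rw [if_neg h, if_neg (Ne.symm h)]
    · refine ⟨p, 1, funext fun q => ?_⟩
      rw [Pi.single_apply]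
      show (if p = q then (1 : ℤ) else 0) = _
      by_cases h : p = q
      · subst h; simp
      · rw [if_neg h, if_neg (Ne.symm h)]
  have hM : Mmat n = (Matrix.fromRows (Bmat n) (Umat n)).submatrix
      (fun r => match r with
        | Sum.inl p => Sum.inr (Sum.inl p)
        | Sum.inr (Sum.inl p) => Sum.inr (Sum.inr p)
        | Sum.inr (Sum.inr (Sum.inl i)) => Sum.inl (Sum.inl i)
        | Sum.inr (Sum.inr (Sum.inr sj)) => Sum.inl (Sum.inr sj)) id := by
    funext r q
    rcases r with p | (p | (i | sj)) <;> rfl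
  rw [hM]
  exact hBU.submatrix _ _
end Schub
end

section
/- Let D ⊆ [n]² with a compression C = (m, {P_k}, {p_k}, {λ_k}) and let α ∈ ℤ_{≥0}^n with α̃ = (α₁,…,α_m). Then α₁ + ⋯ + α_n = #D and P(D,α) ≠ ∅ if and only if α₁ + ⋯ + α_m = #D, α_{m+1} = ⋯ = α_n = 0, and Q(D,C,α̃) ≠ ∅. -/
namespace Schub

/-- Membership in the compressed polytope `Q(D,C,α̃)`, for a compression with data
`m`, classes `P 1, …, P ℓ`, representatives `p 1, …, p ℓ` (the multiplicities are
`(P k).card`). -/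
def InQ (D : Finset (ℕ × ℕ)) (m ℓ : ℕ) (P : ℕ → Finset ℕ) (p : ℕ → ℕ)
    (α : ℕ → ℕ) (y : ℕ → ℕ → ℝ) : Prop :=
  (∀ i ∈ Finset.Icc 1 m, ∀ k ∈ Finset.Icc 1 ℓ, 0 ≤ y i k ∧ y i k ≤ 1) ∧
  (∀ i ∈ Finset.Icc 1 m, (∑ k ∈ Finset.Icc 1 ℓ, ((P k).card : ℝ) * y i k) = (α i : ℝ)) ∧
  (∀ s ∈ Finset.Icc 1 m, ∀ k ∈ Finset.Icc 1 ℓ,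
    ((D.filter fun b => b.2 = p k ∧ b.1 ≤ s).card : ℝ) ≤ ∑ i ∈ Finset.Icc 1 s, y i k)

/-- Two columns with the same box set have the same partial counts. -/
lemma count_col_eq (D : Finset (ℕ × ℕ)) (j j' s : ℕ)
    (h : ∀ r, (r, j) ∈ D ↔ (r, j') ∈ D) :
    (D.filter fun b => b.2 = j ∧ b.1 ≤ s).card =
    (D.filter fun b => b.2 = j' ∧ b.1 ≤ s).card := by
  apply Finset.card_bij (fun b _ => (b.1, j'))
  · intro b hb
    simp only [Finset.mem_filter] at hb
    obtain ⟨hbD, hbj, hbs⟩ := hb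
    refine Finset.mem_filter.mpr ⟨(h b.1).1 ?_, rfl, hbs⟩
    have : (b.1, j) = b := by rw [← hbj]
    rwa [this]
  · intro b hb b' hb' heq
    simp only [Finset.mem_filter] at hb hb'
    have h1 : b.1 = b'.1 := (Prod.ext_iff.mp heq).1
    exact Prod.ext h1 (hb.2.1.trans hb'.2.1.symm)
  · intro b' hb'
    simp only [Finset.mem_filter] at hb'
    obtain ⟨hbD, hbj, hbs⟩ := hb'
    refine ⟨(b'.1, j), Finset.mem_filter.mpr ⟨(h b'.1).2 ?_, rfl, hbs⟩, ?_⟩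
    · have : (b'.1, j') = b' := by rw [← hbj]
      rwa [this]
    · exact Prod.ext rfl hbj.symm

/-- Given a compression `C = (m, {P_k}, {p_k}, {λ_k})` of `D ⊆ [n]²`:
`α₁+⋯+α_n = #D` and `P(D,α) ≠ ∅` iff `α₁+⋯+α_m = #D`, `α_{m+1} = ⋯ = α_n = 0`, and
`Q(D,C,α̃) ≠ ∅`. -/
theorem inP_iff_inQ (n : ℕ) (D : Finset (ℕ × ℕ)) (hD : D ⊆ grid n)
    (m ℓ : ℕ) (P : ℕ → Finset ℕ) (p : ℕ → ℕ) (α : ℕ → ℕ)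
    (hm : m ≤ n)
    (hrows : ∀ b ∈ D, b.1 ≤ m)
    (hPsub : ∀ k ∈ Finset.Icc 1 ℓ, P k ⊆ Finset.Icc 1 n)
    (hPdisj : ∀ k ∈ Finset.Icc 1 ℓ, ∀ k' ∈ Finset.Icc 1 ℓ, k ≠ k' → Disjoint (P k) (P k'))
    (hsame : ∀ k ∈ Finset.Icc 1 ℓ, ∀ c₁ ∈ P k, ∀ c₂ ∈ P k, ∀ r, (r, c₁) ∈ D ↔ (r, c₂) ∈ D)
    (hcover : ∀ c, (∃ r, (r, c) ∈ D) → ∃ k ∈ Finset.Icc 1 ℓ, c ∈ P k)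
    (hrep : ∀ k ∈ Finset.Icc 1 ℓ, p k ∈ P k) :
    ((∑ i ∈ Finset.Icc 1 n, α i) = D.card ∧ ∃ x : ℕ → ℕ → ℝ, InP n D (fun i => (α i : ℝ)) x) ↔
      ((∑ i ∈ Finset.Icc 1 m, α i) = D.card ∧ (∀ i, m < i → i ≤ n → α i = 0) ∧
        ∃ y : ℕ → ℕ → ℝ, InQ D m ℓ P p α y) := by
  classical
  have hgrid : ∀ b ∈ D, (1 ≤ b.1 ∧ b.1 ≤ n) ∧ (1 ≤ b.2 ∧ b.2 ≤ n) := by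
    intro b hb
    have := hD hb
    simpa [grid, Finset.mem_product, Finset.mem_Icc] using this
  have hIm : Finset.Icc 1 m ⊆ Finset.Icc 1 n := Finset.Icc_subset_Icc_right hm
  have hPD : Set.PairwiseDisjoint ((Finset.Icc 1 ℓ : Finset ℕ) : Set ℕ) P :=
    fun a ha b hb hab => hPdisj a (Finset.mem_coe.mp ha) b (Finset.mem_coe.mp hb) hab
  have hUI : (Finset.Icc 1 ℓ).biUnion P ⊆ Finset.Icc 1 n := by
    intro j hj
    obtain ⟨k, hk, hjk⟩ := Finset.mem_biUnion.mp hj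
    exact hPsub k hk hjk
  -- counting boxes fiberwise by column
  have hfib : ∀ j, (D.filter fun b => b.2 = j ∧ b.1 ≤ n) = D.filter fun b => b.2 = j := by
    intro j
    apply Finset.filter_congr
    intro b hb
    simp [(hgrid b hb).1.2]
  have hDcard : D.card = ∑ j ∈ Finset.Icc 1 n, (D.filter fun b => b.2 = j ∧ b.1 ≤ n).card := by
    rw [Finset.card_eq_sum_card_fiberwise (f := fun b => b.2)
      (fun b hb => Finset.mem_Icc.mpr (hgrid b hb).2)]
    exact Finset.sum_congr rfl fun j _ => by rw [hfib j]
  -- counts at level m equal counts at level n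
  have hcntm : ∀ j, (D.filter fun b => b.2 = j ∧ b.1 ≤ m) = D.filter fun b => b.2 = j ∧ b.1 ≤ n := by
    intro j
    apply Finset.filter_congr
    intro b hb
    have h1 := hrows b hb
    simp [h1, le_trans h1 hm]
  constructor
  · rintro ⟨hsum, x, hx0, hxrow, hxcol⟩
    have hC : ∀ j ∈ Finset.Icc 1 n,
        ((D.filter fun b => b.2 = j ∧ b.1 ≤ n).card : ℝ) ≤ ∑ i ∈ Finset.Icc 1 n, x i j := by
      intro j hj
      have hn1 : 1 ≤ n := le_trans (Finset.mem_Icc.mp hj).1 (Finset.mem_Icc.mp hj).2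
      exact hxcol j hj n (Finset.mem_Icc.mpr ⟨hn1, le_refl n⟩)
    have hsumR : ∑ j ∈ Finset.Icc 1 n, (∑ i ∈ Finset.Icc 1 n, x i j) = (D.card : ℝ) := by
      rw [Finset.sum_comm]
      have : ∑ i ∈ Finset.Icc 1 n, ∑ j ∈ Finset.Icc 1 n, x i j
          = ∑ i ∈ Finset.Icc 1 n, ((α i : ℝ)) := Finset.sum_congr rfl fun i hi => hxrow i hi
      rw [this, ← Nat.cast_sum, hsum]
    have hkey : ∀ j ∈ Finset.Icc 1 n, ∑ i ∈ Finset.Icc 1 n, x i j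
        = ((D.filter fun b => b.2 = j ∧ b.1 ≤ n).card : ℝ) := by
      have h0 : ∑ j ∈ Finset.Icc 1 n,
          ((∑ i ∈ Finset.Icc 1 n, x i j) - ((D.filter fun b => b.2 = j ∧ b.1 ≤ n).card : ℝ)) = 0 := by
        rw [Finset.sum_sub_distrib, hsumR]
        have : ∑ j ∈ Finset.Icc 1 n, ((D.filter fun b => b.2 = j ∧ b.1 ≤ n).card : ℝ)
            = (D.card : ℝ) := by rw [← Nat.cast_sum, ← hDcard]
        rw [this, sub_self]
      have h1 := (Finset.sum_eq_zero_iff_of_nonneg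
        (fun j hj => sub_nonneg.mpr (hC j hj))).mp h0
      intro j hj
      have := h1 j hj
      linarith [this]
    -- columns above row m carry no mass
    have hxm : ∀ j ∈ Finset.Icc 1 n,
        ((D.filter fun b => b.2 = j ∧ b.1 ≤ n).card : ℝ) ≤ ∑ i ∈ Finset.Icc 1 m, x i j := by
      intro j hj
      rcases Nat.eq_zero_or_pos m with hm0 | hm1
      · have hDe : D = ∅ := by
          apply Finset.eq_empty_of_forall_notMem
          intro b hb
          have := hrows b hb
          have := (hgrid b hb).1.1
          omega
        have hIe : Finset.Icc 1 m = ∅ := by rw [hm0]; rfl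
        simp [hDe, hIe]
      · have := hxcol j hj m (Finset.mem_Icc.mpr ⟨hm1, hm⟩)
        rwa [hcntm j] at this
    have hxtail : ∀ j ∈ Finset.Icc 1 n, ∀ i ∈ Finset.Icc 1 n \ Finset.Icc 1 m, x i j = 0 := by
      intro j hj
      have hs0 : ∑ i ∈ Finset.Icc 1 n \ Finset.Icc 1 m, x i j = 0 := by
        have h1 := Finset.sum_sdiff (f := fun i => x i j) hIm
        have h2 := hkey j hj
        have h3 := hxm j hj
        have h5 : 0 ≤ ∑ i ∈ Finset.Icc 1 n \ Finset.Icc 1 m, x i j :=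
          Finset.sum_nonneg fun i hi => (hx0 i (Finset.mem_sdiff.mp hi).1 j hj).1
        linarith
      exact fun i hi => (Finset.sum_eq_zero_iff_of_nonneg
        (fun i hi => (hx0 i (Finset.mem_sdiff.mp hi).1 j hj).1)).mp hs0 i hi
    have hα0 : ∀ i, m < i → i ≤ n → α i = 0 := by
      intro i him hin
      have hiI : i ∈ Finset.Icc 1 n := Finset.mem_Icc.mpr ⟨by omega, hin⟩
      have hiS : i ∈ Finset.Icc 1 n \ Finset.Icc 1 m := by
        simp only [Finset.mem_sdiff, Finset.mem_Icc]
        omega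
      have : (α i : ℝ) = 0 := by
        have h' : ∑ j ∈ Finset.Icc 1 n, x i j = (α i : ℝ) := hxrow i hiI
        rw [← h']
        exact Finset.sum_eq_zero fun j hj => hxtail j hj i hiS
      exact_mod_cast this
    refine ⟨?_, hα0, ?_⟩
    · rw [← hsum]
      exact (Finset.sum_subset hIm fun i hi hni => by
        have h1 := Finset.mem_Icc.mp hi
        have h2 : m < i := by
          by_contra hc
          exact hni (Finset.mem_Icc.mpr ⟨h1.1, not_lt.mp hc⟩)
        exact hα0 i h2 h1.2)
    · refine ⟨fun i k => (∑ j ∈ P k, x i j) / ((P k).card : ℝ), ?_, ?_, ?_⟩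
      · intro i hi k hk
        have hcard : (0 : ℝ) < ((P k).card : ℝ) := by
          exact_mod_cast Finset.card_pos.mpr ⟨p k, hrep k hk⟩
        have hiI := hIm hi
        constructor
        · exact div_nonneg (Finset.sum_nonneg fun j hj =>
            (hx0 i hiI j (hPsub k hk hj)).1) hcard.le
        · rw [div_le_one hcard]
          have h := Finset.sum_le_sum (g := fun _ => (1 : ℝ))
            (fun j hj => (hx0 i hiI j (hPsub k hk hj)).2)
          simpa using h
      · intro i hi
        have hiI := hIm hi
        have hmul : ∀ k ∈ Finset.Icc 1 ℓ,
            ((P k).card : ℝ) * ((∑ j ∈ P k, x i j) / ((P k).card : ℝ)) = ∑ j ∈ P k, x i j := by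
          intro k hk
          have hcard : ((P k).card : ℝ) ≠ 0 := by
            exact_mod_cast (Finset.card_pos.mpr ⟨p k, hrep k hk⟩).ne'
          field_simp
        rw [Finset.sum_congr rfl hmul, ← Finset.sum_biUnion hPD]
        rw [Finset.sum_subset hUI (fun j hj hju => ?_)]
        · exact hxrow i hiI
        · -- j uncovered ⇒ column j of D empty ⇒ x i j = 0
          have hcol0 : (D.filter fun b => b.2 = j ∧ b.1 ≤ n) = ∅ := by
            rw [Finset.filter_eq_empty_iff]
            rintro b hb ⟨hbj, -⟩
            have hb' : (b.1, j) ∈ D := by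
              have : (b.1, j) = b := by rw [← hbj]
              rwa [this]
            obtain ⟨k, hk, hjk⟩ := hcover j ⟨b.1, hb'⟩
            exact hju (Finset.mem_biUnion.mpr ⟨k, hk, hjk⟩)
          have hz : ∑ i' ∈ Finset.Icc 1 n, x i' j = 0 := by
            rw [hkey j hj, hcol0]; simp
          exact (Finset.sum_eq_zero_iff_of_nonneg
            (fun i' hi' => (hx0 i' hi' j hj).1)).mp hz i hiI
      · intro s hs k hk
        have hcard : (0 : ℝ) < ((P k).card : ℝ) := by
          exact_mod_cast Finset.card_pos.mpr ⟨p k, hrep k hk⟩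
        have hsI : s ∈ Finset.Icc 1 n := hIm hs
        rw [← Finset.sum_div, le_div_iff₀ hcard, Finset.sum_comm]
        calc ((D.filter fun b => b.2 = p k ∧ b.1 ≤ s).card : ℝ) * ((P k).card : ℝ)
            = ∑ _j ∈ P k, ((D.filter fun b => b.2 = p k ∧ b.1 ≤ s).card : ℝ) := by
              rw [Finset.sum_const, nsmul_eq_mul, mul_comm]
          _ ≤ ∑ j ∈ P k, ∑ i ∈ Finset.Icc 1 s, x i j := by
              apply Finset.sum_le_sum
              intro j hj
              have h1 := hxcol j (hPsub k hk hj) s hsI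
              rwa [count_col_eq D j (p k) s
                (fun r => hsame k hk j hj (p k) (hrep k hk) r)] at h1
  · rintro ⟨hsum, hzero, y, hy0, hyrow, hycol⟩
    set x : ℕ → ℕ → ℝ := fun i j =>
      if h : i ≤ m ∧ ∃ k, k ∈ Finset.Icc 1 ℓ ∧ j ∈ P k then y i h.2.choose else 0 with hxdef
    have hxval : ∀ i j k, i ≤ m → k ∈ Finset.Icc 1 ℓ → j ∈ P k → x i j = y i k := by
      intro i j k him hk hj
      have hc : i ≤ m ∧ ∃ k', k' ∈ Finset.Icc 1 ℓ ∧ j ∈ P k' := ⟨him, k, hk, hj⟩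
      rw [hxdef]
      simp only []
      rw [dif_pos hc]
      obtain ⟨hk', hj'⟩ := hc.2.choose_spec
      congr 1
      by_contra hne
      exact (Finset.disjoint_left.mp (hPdisj _ hk' k hk hne) hj') hj
    have hx0 : ∀ i, 1 ≤ i → ∀ j, 0 ≤ x i j ∧ x i j ≤ 1 := by
      intro i hi1 j
      rw [hxdef]
      simp only []
      split_ifs with h
      · exact hy0 i (Finset.mem_Icc.mpr ⟨hi1, h.1⟩) h.2.choose h.2.choose_spec.1
      · norm_num
    have hxz : ∀ i j, ¬(i ≤ m ∧ ∃ k, k ∈ Finset.Icc 1 ℓ ∧ j ∈ P k) → x i j = 0 := by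
      intro i j h
      rw [hxdef]
      simp only []
      rw [dif_neg h]
    refine ⟨?_, x, ?_, ?_, ?_⟩
    · rw [← hsum]
      exact (Finset.sum_subset hIm fun i hi hni => by
        have h1 := Finset.mem_Icc.mp hi
        have h2 : m < i := by
          by_contra hc
          exact hni (Finset.mem_Icc.mpr ⟨h1.1, not_lt.mp hc⟩)
        exact hzero i h2 h1.2).symm
    · intro i hi j _
      exact hx0 i (Finset.mem_Icc.mp hi).1 j
    · intro i hi
      have hi1 := (Finset.mem_Icc.mp hi).1
      by_cases him : i ≤ m
      · have e1 : ∑ j ∈ (Finset.Icc 1 ℓ).biUnion P, x i j = ∑ j ∈ Finset.Icc 1 n, x i j :=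
          Finset.sum_subset hUI fun j hj hju => hxz i j (by
            rintro ⟨-, k, hk, hjk⟩
            exact hju (Finset.mem_biUnion.mpr ⟨k, hk, hjk⟩))
        show ∑ j ∈ Finset.Icc 1 n, x i j = (α i : ℝ)
        rw [← e1, Finset.sum_biUnion hPD]
        calc ∑ k ∈ Finset.Icc 1 ℓ, ∑ j ∈ P k, x i j
            = ∑ k ∈ Finset.Icc 1 ℓ, ((P k).card : ℝ) * y i k := by
              apply Finset.sum_congr rfl
              intro k hk
              rw [Finset.sum_congr rfl (fun j hj => hxval i j k him hk hj),
                Finset.sum_const, nsmul_eq_mul]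
          _ = (α i : ℝ) := hyrow i (Finset.mem_Icc.mpr ⟨hi1, him⟩)
      · have hz : α i = 0 := hzero i (not_le.mp him) (Finset.mem_Icc.mp hi).2
        show ∑ j ∈ Finset.Icc 1 n, x i j = (α i : ℝ)
        rw [hz]
        push_cast
        exact Finset.sum_eq_zero fun j _ => hxz i j fun hc => him hc.1
    · intro j hj s hs
      have hs1 := (Finset.mem_Icc.mp hs).1
      by_cases hc : (D.filter fun b => b.2 = j ∧ b.1 ≤ s).card = 0
      · rw [hc]
        push_cast
        exact Finset.sum_nonneg fun i hi => (hx0 i (Finset.mem_Icc.mp hi).1 j).1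
      · obtain ⟨b, hb⟩ := Finset.card_ne_zero.mp hc
        simp only [Finset.mem_filter] at hb
        obtain ⟨hbD, hbj, hbs⟩ := hb
        have hbD' : (b.1, j) ∈ D := by
          have : (b.1, j) = b := by rw [← hbj]
          rwa [this]
        obtain ⟨k, hk, hjk⟩ := hcover j ⟨b.1, hbD'⟩
        have hm1 : 1 ≤ m := le_trans (hgrid b hbD).1.1 (hrows b hbD)
        set s' := min s m with hs'
        have hs'I : s' ∈ Finset.Icc 1 m := Finset.mem_Icc.mpr ⟨le_min hs1 hm1, min_le_right _ _⟩
        have hcount : (D.filter fun b => b.2 = j ∧ b.1 ≤ s).card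
            = (D.filter fun b => b.2 = p k ∧ b.1 ≤ s').card := by
          rw [count_col_eq D j (p k) s (fun r => hsame k hk j hjk (p k) (hrep k hk) r)]
          apply congrArg
          apply Finset.filter_congr
          intro b' hb'
          have h1 := hrows b' hb'
          constructor
          · rintro ⟨h2, h3⟩; exact ⟨h2, le_min h3 h1⟩
          · rintro ⟨h2, h3⟩; exact ⟨h2, le_trans h3 (min_le_left _ _)⟩
        rw [hcount]
        calc ((D.filter fun b => b.2 = p k ∧ b.1 ≤ s').card : ℝ)
            ≤ ∑ i ∈ Finset.Icc 1 s', y i k := hycol s' hs'I k hk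
          _ = ∑ i ∈ Finset.Icc 1 s', x i j := by
              apply Finset.sum_congr rfl
              intro i hi
              exact (hxval i j k (le_trans (Finset.mem_Icc.mp hi).2 (min_le_right s m)) hk hjk).symm
          _ ≤ ∑ i ∈ Finset.Icc 1 s, x i j := by
              apply Finset.sum_le_sum_of_subset_of_nonneg
                (Finset.Icc_subset_Icc_right (min_le_left s m))
              intro i hi _
              exact (hx0 i (Finset.mem_Icc.mp hi).1 j).1

end Schub
end
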